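/- arXiv:2206.02953 — 7 statements merged into one kernel-verified Lean document; each statement's English description precedes it below -/
import Mathlib

section
/- Let E and G be finite-dimensional real inner product spaces and let F : E × G → ℝ be differentiable. Assume that for every y ∈ G the function x ↦ F(x,y) is μ-strongly convex and for every x ∈ E the function y ↦ −F(x,y) is μ-strongly convex (μ > 0), and that the gradient operator ν(x,y) = (∇ₓF(x,y), −∇_yF(x,y)) is l-Lipschitz for some l > 0. Then ν is μ-strongly monotone: ⟨ν(z₁) − ν(z₂), z₁ − z₂⟩ ≥ μ‖z₁ − z₂‖² for all z₁, z₂ ∈ E × G. -/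
open scoped RealInnerProductSpace

/-- Gradient inequality for a function that is `μ`-strongly convex (i.e. `g - μ/2‖·‖²` convex). -/
lemma strong_grad_ineq {H : Type*} [NormedAddCommGroup H] [InnerProductSpace ℝ H] [CompleteSpace H]
    {g : H → ℝ} {μ : ℝ}
    (hc : ConvexOn ℝ Set.univ (fun x : H => g x - μ / 2 * ‖x‖ ^ 2))
    {a b : H} {ga : H} (hg : HasGradientAt g ga a) :
    g a + ⟪ga, b - a⟫ + μ / 2 * ‖b - a‖ ^ 2 ≤ g b := by
  set q : H → ℝ := fun x => g x - μ / 2 * ‖x‖ ^ 2 with hq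
  -- derivative of q at a
  have hnorm : HasFDerivAt (fun x : H => μ / 2 * ‖x‖ ^ 2)
      ((μ / 2) • (2 • (innerSL ℝ a))) a :=
    ((hasStrictFDerivAt_norm_sq a).hasFDerivAt).const_smul (μ / 2)
  have hqd : HasFDerivAt q
      ((InnerProductSpace.toDual ℝ H ga : H →L[ℝ] ℝ) - (μ / 2) • (2 • (innerSL ℝ a))) a :=
    hg.hasFDerivAt.sub hnorm
  -- restrict to the segment through a, b
  have hline : ∀ t : ℝ, HasDerivAt (fun t : ℝ => (AffineMap.lineMap a b : ℝ →ᵃ[ℝ] H) t) (b - a) t := by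
    intro t
    simpa [AffineMap.lineMap_apply, vsub_eq_sub] using
      ((hasDerivAt_id t).smul_const (b - a)).add_const a
  have hcomp : HasDerivAt (fun t : ℝ => q ((AffineMap.lineMap a b : ℝ →ᵃ[ℝ] H) t))
      (⟪ga, b - a⟫ - μ * ⟪a, b - a⟫) 0 := by
    have hqd' : HasFDerivAt q
        ((InnerProductSpace.toDual ℝ H ga : H →L[ℝ] ℝ) - (μ / 2) • (2 • (innerSL ℝ a)))
        ((AffineMap.lineMap a b : ℝ →ᵃ[ℝ] H) 0) := by simpa using hqd
    have h2 := hqd'.comp_hasDerivAt 0 (hline 0)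
    simp only [ContinuousLinearMap.coe_sub', Pi.sub_apply, InnerProductSpace.toDual_apply_apply,
      ContinuousLinearMap.coe_smul', Pi.smul_apply, innerSL_apply_apply, smul_eq_mul, nsmul_eq_mul, Nat.cast_ofNat] at h2
    have heq : ⟪ga, b - a⟫ - μ * ⟪a, b - a⟫
        = ⟪ga, b - a⟫ - μ / 2 * (2 * ⟪a, b - a⟫) := by ring
    rw [heq]
    exact h2
    
  have hconv1 : ConvexOn ℝ Set.univ (fun t : ℝ => q ((AffineMap.lineMap a b : ℝ →ᵃ[ℝ] H) t)) := by
    have := hc.comp_affineMap (AffineMap.lineMap a b : ℝ →ᵃ[ℝ] H)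
    simp only [Set.preimage_univ] at this; exact this
  have hslope := hconv1.le_slope_of_hasDerivAt (Set.mem_univ 0) (Set.mem_univ 1)
    one_pos hcomp
  have h01 : (AffineMap.lineMap a b : ℝ →ᵃ[ℝ] H) 0 = a := by simp
  have h11 : (AffineMap.lineMap a b : ℝ →ᵃ[ℝ] H) 1 = b := by simp
  rw [slope_def_field, h01, h11] at hslope
  have hslope' : ⟪ga, b - a⟫ - μ * ⟪a, b - a⟫ ≤ q b - q a := by
    simpa [div_one] using hslope
  have hexp : ‖b - a‖ ^ 2 = ‖b‖ ^ 2 - 2 * ⟪a, b - a⟫ - ‖a‖ ^ 2 := by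
    have h1 : ⟪b - a, b - a⟫ = ‖b - a‖ ^ 2 := real_inner_self_eq_norm_sq _
    have h2 : ⟪a, a⟫ = ‖a‖ ^ 2 := real_inner_self_eq_norm_sq _
    have h3 : ⟪b, b⟫ = ‖b‖ ^ 2 := real_inner_self_eq_norm_sq _
    have h4 : ⟪a, b⟫ = ⟪b, a⟫ := real_inner_comm _ _
    simp only [inner_sub_left, inner_sub_right] at h1 ⊢
    linarith
  have key : μ / 2 * ‖b - a‖ ^ 2 = μ / 2 * ‖b‖ ^ 2 - μ * ⟪a, b - a⟫ - μ / 2 * ‖a‖ ^ 2 := by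
    rw [hexp]; ring
  simp only [hq] at hslope'
  linarith [hslope', key]

/-- For a differentiable `F : E × G → ℝ` that is `μ`-strongly convex in `x` and
`μ`-strongly concave in `y`, with `l`-Lipschitz gradient operator
`ν(x,y) = (∇ₓF(x,y), −∇_yF(x,y))`, the operator `ν` is `μ`-strongly monotone
(with the product inner product `⟨(x₁,y₁),(x₂,y₂)⟩ = ⟨x₁,x₂⟩ + ⟨y₁,y₂⟩`). -/
theorem stmt_0
    {E G : Type*} [NormedAddCommGroup E] [InnerProductSpace ℝ E] [FiniteDimensional ℝ E]
    [NormedAddCommGroup G] [InnerProductSpace ℝ G] [FiniteDimensional ℝ G]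
    (F : E → G → ℝ) (μ l : ℝ) (hμ : 0 < μ) (hl : 0 < l)
    (hdiff : Differentiable ℝ (fun p : E × G => F p.1 p.2))
    (hconvx : ∀ y : G, ConvexOn ℝ Set.univ (fun x : E => F x y - μ / 2 * ‖x‖ ^ 2))
    (hconcy : ∀ x : E, ConvexOn ℝ Set.univ (fun y : G => -F x y - μ / 2 * ‖y‖ ^ 2))
    (ν₁ : E → G → E) (ν₂ : E → G → G)
    (hν₁ : ∀ x y, ν₁ x y = gradient (fun x' => F x' y) x)
    (hν₂ : ∀ x y, ν₂ x y = -gradient (fun y' => F x y') y)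
    (hlip : ∀ x₁ y₁ x₂ y₂,
      ‖ν₁ x₁ y₁ - ν₁ x₂ y₂‖ ^ 2 + ‖ν₂ x₁ y₁ - ν₂ x₂ y₂‖ ^ 2
        ≤ l ^ 2 * (‖x₁ - x₂‖ ^ 2 + ‖y₁ - y₂‖ ^ 2)) :
    ∀ x₁ y₁ x₂ y₂,
      ⟪ν₁ x₁ y₁ - ν₁ x₂ y₂, x₁ - x₂⟫ + ⟪ν₂ x₁ y₁ - ν₂ x₂ y₂, y₁ - y₂⟫
        ≥ μ * (‖x₁ - x₂‖ ^ 2 + ‖y₁ - y₂‖ ^ 2) := by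
  intro x₁ y₁ x₂ y₂
  -- differentiability of partial functions
  have hdx : ∀ (y : G) (x : E), DifferentiableAt ℝ (fun x' => F x' y) x := fun y x =>
    by have : DifferentiableAt ℝ ((fun p : E × G => F p.1 p.2) ∘ (fun x' : E => (x', y))) x :=
        (hdiff (x, y)).comp x (differentiableAt_id.prodMk (differentiableAt_const y))
       exact this
  have hdy : ∀ (x : E) (y : G), DifferentiableAt ℝ (fun y' => F x y') y := fun x y =>
    by have : DifferentiableAt ℝ ((fun p : E × G => F p.1 p.2) ∘ (fun y' : G => (x, y'))) y :=
        (hdiff (x, y)).comp y ((differentiableAt_const x).prodMk differentiableAt_id)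
       exact this
  have hgx : ∀ (x : E) (y : G), HasGradientAt (fun x' => F x' y) (ν₁ x y) x := fun x y => by
    rw [hν₁]; exact (hdx y x).hasGradientAt
  have hgy : ∀ (x : E) (y : G), HasGradientAt (fun y' => -F x y') (ν₂ x y) y := fun x y => by
    have h := (hdy x y).hasGradientAt
    have := h.hasFDerivAt.neg
    rw [hν₂]
    have : HasFDerivAt (fun y' => -F x y')
        ((InnerProductSpace.toDual ℝ G) (-gradient (fun y' => F x y') y)) y := by
      rw [map_neg]; exact h.hasFDerivAt.neg
    simpa only [LinearIsometryEquiv.symm_apply_apply] using this.hasGradientAt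
  -- four strong convexity inequalities
  have ha := strong_grad_ineq (hconvx y₁) (a := x₁) (b := x₂) (hgx x₁ y₁)
  have hb := strong_grad_ineq (hconvx y₂) (a := x₂) (b := x₁) (hgx x₂ y₂)
  have hcc := strong_grad_ineq (hconcy x₁) (a := y₁) (b := y₂) (hgy x₁ y₁)
  have hd := strong_grad_ineq (hconcy x₂) (a := y₂) (b := y₁) (hgy x₂ y₂)
  -- expand inner products of differences
  have e1 : ⟪ν₁ x₁ y₁ - ν₁ x₂ y₂, x₁ - x₂⟫
      = -⟪ν₁ x₁ y₁, x₂ - x₁⟫ - ⟪ν₁ x₂ y₂, x₁ - x₂⟫ := by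
    simp only [inner_sub_left, inner_sub_right]; ring
  have e2 : ⟪ν₂ x₁ y₁ - ν₂ x₂ y₂, y₁ - y₂⟫
      = -⟪ν₂ x₁ y₁, y₂ - y₁⟫ - ⟪ν₂ x₂ y₂, y₁ - y₂⟫ := by
    simp only [inner_sub_left, inner_sub_right]; ring
  have n1 : ‖x₂ - x₁‖ = ‖x₁ - x₂‖ := norm_sub_rev _ _
  have n2 : ‖y₂ - y₁‖ = ‖y₁ - y₂‖ := norm_sub_rev _ _
  rw [n1] at ha
  rw [n2] at hcc
  rw [ge_iff_le, e1, e2]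
  linarith
end

section
/- Let 0 < μ < l and define ν : ℝ² → ℝ² by ν(x, y) = (μx + (l−μ)y, (μ−l)x + μy). Then ν is l-Lipschitz and μ-strongly monotone with unique root 0, and for every step-size α > 0 and every z ∈ ℝ², ‖z − α·ν(z)‖² = (1 − 2αμ + α²(μ² + (l−μ)²))·‖z‖² ≥ (1 − 2μ²/l²)·‖z‖². In particular, no choice of constant step-size makes gradient descent ascent on this operator contract faster than the factor 1 − 2/κ² per step, where κ = l/μ. -/
open scoped RealInnerProductSpace

private lemma insq (v w : EuclideanSpace ℝ (Fin 2)) : ⟪v, w⟫ = v 0 * w 0 + v 1 * w 1 := by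
  simp [PiLp.inner_apply, Fin.sum_univ_two, RCLike.inner_apply]; ring

private lemma nsq (w : EuclideanSpace ℝ (Fin 2)) : ‖w‖ ^ 2 = w 0 ^ 2 + w 1 ^ 2 := by
  rw [← real_inner_self_eq_norm_sq, insq]; ring

/-- Lower bound construction on ℝ²: the operator
`ν(x, y) = (μx + (l−μ)y, (μ−l)x + μy)` (with `0 < μ < l`) is `l`-Lipschitz and
`μ`-strongly monotone with unique root `0`, and for every step-size `α > 0`,
`‖z − α ν(z)‖² = (1 − 2αμ + α²(μ² + (l−μ)²))‖z‖² ≥ (1 − 2μ²/l²)‖z‖²`, so GDA cannot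
contract faster than the factor `1 − 2/κ²` per step, `κ = l/μ`. -/
theorem stmt_6
    (μ l : ℝ) (hμ : 0 < μ) (hμl : μ < l)
    (ν : EuclideanSpace ℝ (Fin 2) → EuclideanSpace ℝ (Fin 2))
    (hν : ∀ z : EuclideanSpace ℝ (Fin 2),
      ν z 0 = μ * z 0 + (l - μ) * z 1 ∧ ν z 1 = (μ - l) * z 0 + μ * z 1) :
    (∀ z₁ z₂, ‖ν z₁ - ν z₂‖ ≤ l * ‖z₁ - z₂‖) ∧
    (∀ z₁ z₂, ⟪ν z₁ - ν z₂, z₁ - z₂⟫ ≥ μ * ‖z₁ - z₂‖ ^ 2) ∧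
    (ν 0 = 0 ∧ ∀ z, ν z = 0 → z = 0) ∧
    (∀ α : ℝ, 0 < α → ∀ z : EuclideanSpace ℝ (Fin 2),
      ‖z - α • ν z‖ ^ 2 = (1 - 2 * α * μ + α ^ 2 * (μ ^ 2 + (l - μ) ^ 2)) * ‖z‖ ^ 2 ∧
      (1 - 2 * α * μ + α ^ 2 * (μ ^ 2 + (l - μ) ^ 2)) * ‖z‖ ^ 2
        ≥ (1 - 2 * μ ^ 2 / l ^ 2) * ‖z‖ ^ 2) := by
  refine ⟨?_, ?_, ⟨?_, ?_⟩, ?_⟩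
  · intro z₁ z₂
    have h1 := hν z₁; have h2 := hν z₂
    have hsq : ‖ν z₁ - ν z₂‖ ^ 2 ≤ (l * ‖z₁ - z₂‖) ^ 2 := by
      rw [nsq, mul_pow, nsq]
      simp only [PiLp.sub_apply, h1.1, h1.2, h2.1, h2.2]
      nlinarith [sq_nonneg (z₁ 0 - z₂ 0), sq_nonneg (z₁ 1 - z₂ 1), mul_pos hμ (sub_pos.2 hμl)]
    exact (pow_le_pow_iff_left₀ (norm_nonneg _) (mul_nonneg (hμ.trans hμl).le (norm_nonneg _)) two_ne_zero).mp hsq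
  · intro z₁ z₂
    have h1 := hν z₁; have h2 := hν z₂
    rw [ge_iff_le, nsq, insq]
    simp only [PiLp.sub_apply, h1.1, h1.2, h2.1, h2.2]
    ring_nf
    nlinarith [sq_nonneg (z₁ 0 - z₂ 0)]
  · have h := hν 0
    ext i
    fin_cases i
    · simpa using h.1
    · simpa using h.2
  · intro z hz
    have h := hν z
    have h0 : ν z 0 = 0 := by rw [hz]; rfl
    have h1 : ν z 1 = 0 := by rw [hz]; rfl
    rw [h.1] at h0; rw [h.2] at h1
    have hS : 0 < μ ^ 2 + (l - μ) ^ 2 := by positivity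
    have ha : z 0 = 0 := by
      have : (μ ^ 2 + (l - μ) ^ 2) * z 0 = 0 := by linear_combination μ * h0 - (l - μ) * h1
      exact by nlinarith [this]
    have hb : z 1 = 0 := by
      have : (μ ^ 2 + (l - μ) ^ 2) * z 1 = 0 := by linear_combination (l - μ) * h0 + μ * h1
      exact by nlinarith [this]
    ext i; fin_cases i <;> simpa [ha, hb]
  · intro α hα z
    have h := hν z
    constructor
    · rw [nsq, nsq]
      simp only [PiLp.sub_apply, PiLp.smul_apply, smul_eq_mul, h.1, h.2]
      ring
    · have hl : 0 < l := hμ.trans hμl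
      have hdiv : 2 * μ ^ 2 / l ^ 2 * l ^ 2 = 2 * μ ^ 2 := by field_simp
      have hS : (0:ℝ) < μ ^ 2 + (l - μ) ^ 2 := by positivity
      have h2 : 2 * α * μ - α ^ 2 * (μ ^ 2 + (l - μ) ^ 2) ≤ 2 * μ ^ 2 / l ^ 2 := by
        rw [le_div_iff₀ (by positivity : (0:ℝ) < l ^ 2)]
        nlinarith [sq_nonneg ((μ ^ 2 + (l - μ) ^ 2) * l * α - μ * l),
          mul_nonneg (sq_nonneg μ) (sq_nonneg (l - 2 * μ)), hS]
      have key : 1 - 2 * μ ^ 2 / l ^ 2 ≤ 1 - 2 * α * μ + α ^ 2 * (μ ^ 2 + (l - μ) ^ 2) := by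
        linarith
      exact mul_le_mul_of_nonneg_right key (sq_nonneg _)
end

section
/- Let E be a finite-dimensional real inner product space, ν : E → E l-Lipschitz and μ-strongly monotone with 0 < μ ≤ l, and let z* be the unique root of ν. Fix a step-size α with 0 < α < 1/l. Then for every z ∈ E there exists a unique z′ ∈ E satisfying the implicit proximal-point update z′ = z − α·ν(z′), and this z′ satisfies ‖z′ − z*‖² ≤ (1 + αμ)^{−2}·‖z − z*‖². Consequently, for α = 1/(2l) the proximal-point iterates satisfy ‖z_K − z*‖² ≤ (1 + μ/(2l))^{−2K}·‖z₀ − z*‖² for every K ≥ 0. -/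
open scoped RealInnerProductSpace

/-- Proximal point method for an `l`-Lipschitz, `μ`-strongly monotone `ν` with root `z*`:
for `0 < α < 1/l` the implicit update `z′ = z − α ν(z′)` has a unique solution and
contracts as `‖z′ − z*‖² ≤ (1 + αμ)⁻²‖z − z*‖²`; consequently with `α = 1/(2l)` the
iterates satisfy `‖z_K − z*‖² ≤ (1 + μ/(2l))^{−2K}‖z₀ − z*‖²`. -/
theorem stmt_7
    {E : Type*} [NormedAddCommGroup E] [InnerProductSpace ℝ E] [FiniteDimensional ℝ E]
    (ν : E → E) (μ l : ℝ) (hμ : 0 < μ) (hμl : μ ≤ l)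
    (hlip : ∀ z₁ z₂, ‖ν z₁ - ν z₂‖ ≤ l * ‖z₁ - z₂‖)
    (hmono : ∀ z₁ z₂, ⟪ν z₁ - ν z₂, z₁ - z₂⟫ ≥ μ * ‖z₁ - z₂‖ ^ 2)
    (zs : E) (hzs : ν zs = 0)
    (α : ℝ) (hα0 : 0 < α) (hα : α < 1 / l) :
    (∀ z : E, ∃! z' : E, z' = z - α • ν z') ∧
    (∀ z z' : E, z' = z - α • ν z' →
      ‖z' - zs‖ ^ 2 ≤ ((1 + α * μ) ^ 2)⁻¹ * ‖z - zs‖ ^ 2) ∧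
    (∀ z : ℕ → E, (∀ k, z (k + 1) = z k - (1 / (2 * l)) • ν (z (k + 1))) →
      ∀ K : ℕ, ‖z K - zs‖ ^ 2 ≤ ((1 + μ / (2 * l)) ^ (2 * K))⁻¹ * ‖z 0 - zs‖ ^ 2) := by
  have hl : 0 < l := lt_of_lt_of_le hμ hμl
  -- the contraction estimate (part 2), proved generally first
  have key : ∀ (β : ℝ), 0 < β → ∀ z z' : E, z' = z - β • ν z' →
      (1 + β * μ) ^ 2 * ‖z' - zs‖ ^ 2 ≤ ‖z - zs‖ ^ 2 := by
    intro β hβ z z' h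
    have hz : z - zs = (z' - zs) + β • ν z' := by
      rw [← eq_sub_iff_add_eq.mp h]; abel
    have hexp : ‖z - zs‖ ^ 2
        = ‖z' - zs‖ ^ 2 + 2 * (β * ⟪z' - zs, ν z'⟫) + β ^ 2 * ‖ν z'‖ ^ 2 := by
      rw [hz, @norm_add_sq_real, real_inner_smul_right, norm_smul]
      simp [mul_pow, abs_of_pos hβ]
    have hm := hmono z' zs
    rw [hzs, sub_zero] at hm
    have hm' : ⟪z' - zs, ν z'⟫ ≥ μ * ‖z' - zs‖ ^ 2 := by
      rwa [real_inner_comm] at hm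
    have hcs : ⟪ν z', z' - zs⟫ ≤ ‖ν z'‖ * ‖z' - zs‖ := real_inner_le_norm _ _
    have hnν : μ * ‖z' - zs‖ ≤ ‖ν z'‖ := by
      rcases eq_or_lt_of_le (norm_nonneg (z' - zs)) with hn | hn
      · nlinarith [norm_nonneg (ν z')]
      · have := hm.trans hcs
        nlinarith
    have hν2 : μ ^ 2 * ‖z' - zs‖ ^ 2 ≤ ‖ν z'‖ ^ 2 := by
      nlinarith [norm_nonneg (z' - zs), mul_nonneg hμ.le (norm_nonneg (z' - zs))]
    nlinarith [hm', hν2, sq_nonneg β, norm_nonneg (z' - zs)]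
  refine ⟨?_, ?_, ?_⟩
  · -- existence and uniqueness via Banach fixed point
    intro z
    set K : NNReal := ⟨α * l, by positivity⟩ with hK
    have hK1 : K < 1 := by
      rw [← NNReal.coe_lt_coe]
      show α * l < 1
      calc α * l < (1 / l) * l := by
            exact mul_lt_mul_of_pos_right hα hl
        _ = 1 := by field_simp
    have hlipf : LipschitzWith K (fun w => z - α • ν w) := by
      intro a b
      simp only [edist_dist]
      rw [← ENNReal.ofReal_coe_nnreal, ← ENNReal.ofReal_mul (by positivity)]
      apply ENNReal.ofReal_le_ofReal
      rw [dist_eq_norm, dist_eq_norm]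
      have : (z - α • ν a) - (z - α • ν b) = α • (ν b - ν a) := by
        rw [smul_sub]; abel
      rw [this, norm_smul, Real.norm_of_nonneg hα0.le]
      have := hlip b a
      calc α * ‖ν b - ν a‖ ≤ α * (l * ‖b - a‖) := by
            exact mul_le_mul_of_nonneg_left this hα0.le
        _ = (K : ℝ) * ‖a - b‖ := by rw [norm_sub_rev]; simp only [hK, NNReal.coe_mk]; exact (mul_assoc α l ‖a - b‖).symm
    have hcontr : ContractingWith K (fun w => z - α • ν w) := ⟨hK1, hlipf⟩
    haveI : Nonempty E := ⟨0⟩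
    refine ⟨hcontr.fixedPoint _, ?_, ?_⟩
    · exact (ContractingWith.fixedPoint_isFixedPt hcontr).symm
    · intro y hy
      exact hcontr.fixedPoint_unique hy.symm
  · intro z z' h
    have h2 := key α hα0 z z' h
    have hpos : (0:ℝ) < (1 + α * μ) ^ 2 := by positivity
    rw [inv_mul_eq_div, le_div_iff₀ hpos]
    nlinarith
  · intro z hz K
    set P : ℝ := 1 + μ / (2 * l) with hP
    have hPpos : 0 < P := by positivity
    induction K with
    | zero => simp
    | succ K ih =>
      have hβ : (0:ℝ) < 1 / (2 * l) := by positivity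
      have h2 := key (1 / (2 * l)) hβ (z K) (z (K + 1)) (hz K)
      have hstep : ‖z (K + 1) - zs‖ ^ 2 ≤ (P ^ 2)⁻¹ * ‖z K - zs‖ ^ 2 := by
        have hpos : (0:ℝ) < P ^ 2 := by positivity
        rw [inv_mul_eq_div, le_div_iff₀ hpos]
        have : P = 1 + 1 / (2 * l) * μ := by rw [hP]; field_simp
        rw [this] at hpos ⊢
        nlinarith
      calc ‖z (K + 1) - zs‖ ^ 2 ≤ (P ^ 2)⁻¹ * ‖z K - zs‖ ^ 2 := hstep
        _ ≤ (P ^ 2)⁻¹ * ((P ^ (2 * K))⁻¹ * ‖z 0 - zs‖ ^ 2) := by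
            apply mul_le_mul_of_nonneg_left ih (by positivity)
        _ = (P ^ (2 * (K + 1)))⁻¹ * ‖z 0 - zs‖ ^ 2 := by
            rw [show 2 * (K + 1) = 2 * K + 2 by ring, pow_add, mul_inv]
            ring
end

section
/- Let E be a real inner product space, n ≥ 1, l > 0, 0 < μ ≤ l, and 0 < α ≤ μ/(5nl²). Let M₁, …, Mₙ and J₁, …, Jₙ be continuous linear operators on E with ‖Mⱼ‖ ≤ l and ‖Jₜ‖ ≤ l for all j, t, and suppose the average M̄ = (1/n)·Σⱼ Mⱼ satisfies ⟨M̄v, v⟩ ≥ μ‖v‖² for all v ∈ E. Define H = I − α·Σⱼ₌₁ⁿ Aⱼ∘Mⱼ, where Aⱼ = (I − αJₙ)∘(I − αJₙ₋₁)∘⋯∘(I − αJⱼ₊₁) (with Aₙ = I). Then the operator norm satisfies ‖H‖ ≤ 1 − nαμ/2. -/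
set_option maxHeartbeats 1000000


open scoped RealInnerProductSpace

private lemma aux_pow_bound : ∀ (m : ℕ) (x : ℝ), 0 ≤ x → 5 * m * x ≤ 1 →
    (1 + x) ^ m ≤ 1 + 5 / 4 * m * x := by
  intro m
  induction m with
  | zero => intro x hx _; simp
  | succ m ih =>
    intro x hx h
    have hm : 5 * (m : ℝ) * x ≤ 1 := by
      have : (m : ℝ) ≤ (m : ℝ) + 1 := by linarith
      push_cast at h ⊢
      nlinarith
    have h1 := ih x hx hm
    have hp : (0:ℝ) ≤ (1 + x) ^ m := by positivity
    calc (1 + x) ^ (m + 1) = (1 + x) ^ m * (1 + x) := by ring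
      _ ≤ (1 + 5 / 4 * m * x) * (1 + x) := by nlinarith
      _ ≤ 1 + 5 / 4 * (m + 1 : ℕ) * x := by push_cast; nlinarith
  
private lemma aux_prod_bound {E : Type*} [NormedAddCommGroup E] [InnerProductSpace ℝ E]
    (e : ℝ) (he : 0 ≤ e) :
    ∀ L : List (E →L[ℝ] E), (∀ T ∈ L, ‖T - 1‖ ≤ e) →
      ‖L.prod - 1‖ ≤ (1 + e) ^ L.length - 1 := by
  intro L
  induction L with
  | nil => intro _; simp
  | cons T L ih =>
    intro h
    have hT : ‖T - 1‖ ≤ e := h T (by simp)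
    have hP := ih (fun S hS => h S (by simp [hS]))
    have hTn : ‖T‖ ≤ 1 + e := by
      have h1 : ‖(1 : E →L[ℝ] E)‖ ≤ 1 := by
        rw [ContinuousLinearMap.one_def]; exact ContinuousLinearMap.norm_id_le
      calc ‖T‖ = ‖(T - 1) + 1‖ := by rw [sub_add_cancel]
        _ ≤ ‖T - 1‖ + ‖(1 : E →L[ℝ] E)‖ := norm_add_le _ _
        _ ≤ 1 + e := by linarith
    have key : (T :: L).prod - 1 = T * (L.prod - 1) + (T - 1) := by
      rw [List.prod_cons]; noncomm_ring
    have hlen : (0:ℝ) ≤ (1 + e) ^ L.length - 1 := by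
      have : (1:ℝ) ≤ (1+e) ^ L.length := one_le_pow₀ (by linarith)
      linarith
    calc ‖(T :: L).prod - 1‖ = ‖T * (L.prod - 1) + (T - 1)‖ := by rw [key]
      _ ≤ ‖T * (L.prod - 1)‖ + ‖T - 1‖ := norm_add_le _ _
      _ ≤ ‖T‖ * ‖L.prod - 1‖ + e := by
          have := norm_mul_le T (L.prod - 1); linarith
      _ ≤ (1 + e) * ((1 + e) ^ L.length - 1) + e := by
          have := norm_nonneg (L.prod - 1)
          nlinarith
      _ = (1 + e) ^ (T :: L).length - 1 := by
          simp [List.length_cons, pow_succ]; ring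

/-- Spectral-norm bound on the epoch matrix of GDA without replacement:
with `‖Mⱼ‖ ≤ l`, `‖Jₜ‖ ≤ l`, the average `M̄ = (1/n)ΣMⱼ` satisfying `⟨M̄v,v⟩ ≥ μ‖v‖²`,
and `0 < α ≤ μ/(5nl²)`, the operator
`H = I − α Σⱼ Aⱼ∘Mⱼ` with `Aⱼ = (I − αJₙ)∘⋯∘(I − αJⱼ₊₁)` satisfies `‖H‖ ≤ 1 − nαμ/2`. -/
theorem stmt_8
    {E : Type*} [NormedAddCommGroup E] [InnerProductSpace ℝ E]
    (n : ℕ) (hn : 1 ≤ n) (l μ α : ℝ) (hl : 0 < l) (hμ : 0 < μ) (hμl : μ ≤ l)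
    (hα0 : 0 < α) (hα : α ≤ μ / (5 * n * l ^ 2))
    (M J : ℕ → (E →L[ℝ] E))
    (hM : ∀ j ∈ Finset.Icc 1 n, ‖M j‖ ≤ l)
    (hJ : ∀ t ∈ Finset.Icc 1 n, ‖J t‖ ≤ l)
    (havg : ∀ v : E, ⟪((n : ℝ)⁻¹ • ∑ j ∈ Finset.Icc 1 n, M j) v, v⟫ ≥ μ * ‖v‖ ^ 2)
    (H : E →L[ℝ] E)
    (hH : H = 1 - α • ∑ j ∈ Finset.Icc 1 n,
        (((List.range (n - j)).map (fun k => (1 : E →L[ℝ] E) - α • J (n - k))).prod).comp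
          (M j)) :
    ‖H‖ ≤ 1 - n * α * μ / 2 := by
  have hn0 : (0:ℝ) < (n:ℝ) := by exact_mod_cast Nat.lt_of_lt_of_le Nat.zero_lt_one hn
  set S := Finset.Icc 1 n with hS
  set A : ℕ → (E →L[ℝ] E) :=
    fun j => ((List.range (n - j)).map (fun k => (1 : E →L[ℝ] E) - α • J (n - k))).prod with hA
  -- numeric facts
  have h5 : (0:ℝ) < 5 * n * l ^ 2 := by positivity
  have hcl2 : (n:ℝ) * α * l ^ 2 ≤ μ / 5 := by
    have := (le_div_iff₀ h5).mp hα
    nlinarith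
  have hna : (0:ℝ) ≤ (n:ℝ) * α := by positivity
  have hsqml : μ ^ 2 ≤ l ^ 2 := by nlinarith
  have hmu2 : (n:ℝ) * α * (μ ^ 2) ≤ (n:ℝ) * α * (l ^ 2) := by
    exact mul_le_mul_of_nonneg_left hsqml hna
  have hcmu : (n:ℝ) * α * μ ≤ 1 / 5 := by nlinarith [hmu2, hcl2, hμ]
  have hcl : 5 * (n:ℝ) * (α * l) ≤ 1 := by nlinarith [hcl2, hμl, hl]
  -- split H
  have hsplit : H = (1 - α • ∑ j ∈ S, M j) - α • ∑ j ∈ S, ((A j) - 1).comp (M j) := by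
    rw [hH]
    have : ∑ j ∈ S, (A j).comp (M j)
        = (∑ j ∈ S, M j) + ∑ j ∈ S, ((A j) - 1).comp (M j) := by
      rw [← Finset.sum_add_distrib]
      refine Finset.sum_congr rfl fun j _ => ?_
      rw [ContinuousLinearMap.sub_comp]
      rw [ContinuousLinearMap.one_def, ContinuousLinearMap.id_comp]
      abel
    rw [this, smul_add]
    abel
  -- bound on the first part
  set T0 : E →L[ℝ] E := (n:ℝ)⁻¹ • ∑ j ∈ S, M j with hT0
  have hT0n : ‖T0‖ ≤ l := by
    have e1 : ‖(n:ℝ)⁻¹ • ∑ j ∈ S, M j‖ = ‖(n:ℝ)⁻¹‖ * ‖∑ j ∈ S, M j‖ := norm_smul ((n:ℝ)⁻¹) (∑ j ∈ S, M j)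
    rw [hT0, e1]
    have hsum : ‖∑ j ∈ S, M j‖ ≤ (n:ℝ) * l := by
      calc ‖∑ j ∈ S, M j‖ ≤ ∑ j ∈ S, ‖M j‖ := norm_sum_le _ _
        _ ≤ ∑ j ∈ S, l := Finset.sum_le_sum hM
        _ = (n:ℝ) * l := by
            rw [Finset.sum_const, hS, Nat.card_Icc]; simp [nsmul_eq_mul]
    have hnn : ‖(n:ℝ)⁻¹‖ = (n:ℝ)⁻¹ := by
      rw [Real.norm_eq_abs, abs_of_pos (by positivity)]
    rw [hnn]
    calc (n:ℝ)⁻¹ * ‖∑ j ∈ S, M j‖ ≤ (n:ℝ)⁻¹ * ((n:ℝ) * l) := by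
          exact mul_le_mul_of_nonneg_left hsum (by positivity)
      _ = l := by field_simp
  have hα1 : α • (∑ j ∈ S, M j) = ((n:ℝ) * α) • T0 := by
    rw [hT0, smul_smul, mul_comm (n:ℝ) α, mul_assoc, mul_inv_cancel₀ (ne_of_gt hn0), mul_one]
  have h1 : ‖1 - α • ∑ j ∈ S, M j‖ ≤ 1 - 9/10 * ((n:ℝ) * α * μ) := by
    apply ContinuousLinearMap.opNorm_le_bound _ (by linarith)
    intro v
    set c : ℝ := (n:ℝ) * α with hc
    have hc0 : 0 < c := by positivity
    have happ : (1 - α • ∑ j ∈ S, M j) v = v - c • (T0 v) := by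
      rw [hα1]
      simp [ContinuousLinearMap.sub_apply, ContinuousLinearMap.smul_apply,
        ContinuousLinearMap.one_apply]
    rw [happ]
    have hw : ‖T0 v‖ ≤ l * ‖v‖ := by
      calc ‖T0 v‖ ≤ ‖T0‖ * ‖v‖ := T0.le_opNorm v
        _ ≤ l * ‖v‖ := mul_le_mul_of_nonneg_right hT0n (norm_nonneg v)
    have hin : ⟪T0 v, v⟫ ≥ μ * ‖v‖ ^ 2 := havg v
    have hsq : ‖v - c • (T0 v)‖ ^ 2 ≤ ((1 - 9/10 * (c * μ)) * ‖v‖) ^ 2 := by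
      have hns := norm_sub_sq_real v (c • (T0 v))
      have i1 : c * (μ * ‖v‖ ^ 2) ≤ c * ⟪T0 v, v⟫ := mul_le_mul_of_nonneg_left hin (le_of_lt hc0)
      have h1 : ⟪v, c • T0 v⟫ = c * ⟪T0 v, v⟫ := by
        rw [real_inner_smul_right, real_inner_comm]
      have h2 : ‖c • T0 v‖ ^ 2 = c ^ 2 * ‖T0 v‖ ^ 2 := by
        rw [norm_smul, Real.norm_eq_abs, abs_of_pos hc0]; ring
      have h3 : ‖T0 v‖ ^ 2 ≤ l ^ 2 * ‖v‖ ^ 2 := by nlinarith [norm_nonneg (T0 v), norm_nonneg v]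
      have h4 : c * l ^ 2 ≤ μ / 5 := hcl2
      have h5' : c * μ ≤ 1 / 5 := hcmu
      have hv2 : (0:ℝ) ≤ ‖v‖ ^ 2 := by positivity
      have i2 : c ^ 2 * ‖T0 v‖ ^ 2 ≤ c ^ 2 * (l ^ 2 * ‖v‖ ^ 2) :=
        mul_le_mul_of_nonneg_left h3 (sq_nonneg c)
      have i3 : c ^ 2 * (l ^ 2 * ‖v‖ ^ 2) ≤ (c * μ / 5) * ‖v‖ ^ 2 := by
        have := mul_le_mul_of_nonneg_left h4 (le_of_lt hc0)
        nlinarith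
      have i4 : (0:ℝ) ≤ c ^ 2 * μ ^ 2 * ‖v‖ ^ 2 := by positivity
      nlinarith [hns, h1, h2, i1, i2, i3, i4]
    have hrhs : 0 ≤ (1 - 9/10 * (c * μ)) * ‖v‖ := by
      have : c * μ ≤ 1/5 := hcmu
      have := norm_nonneg v
      nlinarith
    nlinarith [norm_nonneg (v - c • (T0 v))]
  -- bound on the second part
  have hAj : ∀ j ∈ S, ‖A j - 1‖ ≤ 5/4 * (n:ℝ) * (α * l) := by
    intro j hj
    have hlist : ∀ T ∈ (List.range (n - j)).map
        (fun k => (1 : E →L[ℝ] E) - α • J (n - k)), ‖T - 1‖ ≤ α * l := by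
      intro T hT
      rw [List.mem_map] at hT
      obtain ⟨k, hk, rfl⟩ := hT
      rw [List.mem_range] at hk
      have hmem : n - k ∈ S := by
        rw [hS, Finset.mem_Icc]
        constructor
        · omega
        · omega
      have : (1 : E →L[ℝ] E) - α • J (n - k) - 1 = -(α • J (n - k)) := by abel
      rw [this, norm_neg, norm_smul α (J (n - k)), Real.norm_eq_abs, abs_of_pos hα0]
      exact mul_le_mul_of_nonneg_left (hJ _ hmem) (le_of_lt hα0)
    have hb := aux_prod_bound (α * l) (by positivity) _ hlist
    rw [List.length_map, List.length_range] at hb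
    have hmono : (1 + α * l) ^ (n - j) ≤ (1 + α * l) ^ n :=
      pow_le_pow_right₀ (by nlinarith) (Nat.sub_le n j)
    have hpow := aux_pow_bound n (α * l) (by positivity) hcl
    calc ‖A j - 1‖ ≤ (1 + α * l) ^ (n - j) - 1 := hb
      _ ≤ (1 + α * l) ^ n - 1 := by linarith
      _ ≤ 5/4 * (n:ℝ) * (α * l) := by linarith
  have h2 : ‖α • ∑ j ∈ S, ((A j) - 1).comp (M j)‖ ≤ (n:ℝ) * α * μ / 4 := by
    rw [norm_smul α (∑ j ∈ S, ((A j) - 1).comp (M j)), Real.norm_eq_abs, abs_of_pos hα0]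
    have hterm : ∀ j ∈ S, ‖((A j) - 1).comp (M j)‖ ≤ (5/4 * (n:ℝ) * (α * l)) * l := by
      intro j hj
      calc ‖((A j) - 1).comp (M j)‖ ≤ ‖A j - 1‖ * ‖M j‖ := ContinuousLinearMap.opNorm_comp_le _ _
        _ ≤ (5/4 * (n:ℝ) * (α * l)) * l := by
            apply mul_le_mul (hAj j hj) (hM j hj) (norm_nonneg _)
            positivity
    have hsum : ‖∑ j ∈ S, ((A j) - 1).comp (M j)‖ ≤ (n:ℝ) * ((5/4 * (n:ℝ) * (α * l)) * l) := by
      calc ‖∑ j ∈ S, ((A j) - 1).comp (M j)‖ ≤ ∑ j ∈ S, ‖((A j) - 1).comp (M j)‖ :=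
            norm_sum_le _ _
        _ ≤ ∑ j ∈ S, (5/4 * (n:ℝ) * (α * l)) * l := Finset.sum_le_sum hterm
        _ = (n:ℝ) * ((5/4 * (n:ℝ) * (α * l)) * l) := by
            rw [Finset.sum_const, hS, Nat.card_Icc]; simp [nsmul_eq_mul]
    calc α * ‖∑ j ∈ S, ((A j) - 1).comp (M j)‖
        ≤ α * ((n:ℝ) * ((5/4 * (n:ℝ) * (α * l)) * l)) :=
          mul_le_mul_of_nonneg_left hsum (le_of_lt hα0)
      _ = 5/4 * (((n:ℝ) * α) * ((n:ℝ) * α * l ^ 2)) := by ring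
      _ ≤ 5/4 * (((n:ℝ) * α) * (μ / 5)) := by
          apply mul_le_mul_of_nonneg_left _ (by norm_num)
          exact mul_le_mul_of_nonneg_left hcl2 (by positivity)
      _ = (n:ℝ) * α * μ / 4 := by ring
  have hs0 : 0 ≤ (n:ℝ) * α * μ := by positivity
  calc ‖H‖ = ‖(1 - α • ∑ j ∈ S, M j) - α • ∑ j ∈ S, ((A j) - 1).comp (M j)‖ := by rw [hsplit]
    _ ≤ ‖1 - α • ∑ j ∈ S, M j‖ + ‖α • ∑ j ∈ S, ((A j) - 1).comp (M j)‖ := norm_sub_le _ _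
    _ ≤ (1 - 9/10 * ((n:ℝ) * α * μ)) + (n:ℝ) * α * μ / 4 := add_le_add h1 h2
    _ ≤ 1 - (n:ℝ) * α * μ / 2 := by linarith
end

section
/- Let E be a finite-dimensional real inner product space, n ≥ 1, l > 0, 0 < μ ≤ l, and 0 < α ≤ μ/(5nl²). Let M₁, …, Mₙ and J₁, …, Jₙ be continuous linear operators on E with ‖Mⱼ‖ ≤ l and ‖Jₜ‖ ≤ l for all j, t, and suppose the average M̄ = (1/n)·Σⱼ Mⱼ satisfies ⟨M̄v, v⟩ ≥ μ‖v‖² for all v ∈ E. Define H = I + α·Σⱼ₌₁ⁿ Bⱼ∘Mⱼ, where Bⱼ = (I + αJₙ)∘(I + αJₙ₋₁)∘⋯∘(I + αJⱼ₊₁) (with Bₙ = I). Then ‖Hv‖ ≥ (1 + 3nαμ/4)·‖v‖ for all v ∈ E, H is bijective, and its inverse satisfies ‖H⁻¹‖ ≤ 1 − nαμ/2. -/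
open scoped RealInnerProductSpace

lemma stmt9_pow_aux (x : ℝ) (hx : 0 ≤ x) : ∀ m : ℕ, 2 * m * x ≤ 1 → (1 + x) ^ m ≤ 1 + 2 * m * x := by
  intro m
  induction m with
  | zero => simp
  | succ m ih =>
    intro h
    have hm : 2 * (m:ℝ) * x ≤ 1 := by
      refine le_trans ?_ h
      have : (m:ℝ) ≤ (m+1 : ℕ) := by exact_mod_cast Nat.le_succ m
      nlinarith [Nat.cast_nonneg (α := ℝ) m]
    have h1 := ih hm
    have hmx : 2 * (m:ℝ) * x * x ≤ x := by nlinarith [Nat.cast_nonneg (α := ℝ) m]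
    have : (1+x)^(m+1) = (1+x)^m * (1+x) := by ring
    rw [this]
    push_cast
    nlinarith [pow_nonneg (by linarith : (0:ℝ) ≤ 1+x) m]

lemma stmt9_prod_aux {E : Type*} [NormedAddCommGroup E] [InnerProductSpace ℝ E]
    (x : ℝ) (hx : 0 ≤ x) :
    ∀ (L : List (E →L[ℝ] E)), (∀ a ∈ L, ‖a - 1‖ ≤ x) → ‖L.prod - 1‖ ≤ (1+x)^L.length - 1 := by
  intro L
  induction L with
  | nil => simp
  | cons a L ih =>
    intro h
    have hP := ih (fun b hb => h b (List.mem_cons_of_mem _ hb))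
    have ha : ‖a - 1‖ ≤ x := h a List.mem_cons_self
    have hPn : ‖L.prod‖ ≤ (1+x)^L.length := by
      calc ‖L.prod‖ ≤ ‖L.prod - 1‖ + ‖(1 : E →L[ℝ] E)‖ := by
            simpa using norm_add_le (L.prod - 1) 1
        _ ≤ ((1+x)^L.length - 1) + 1 := by
            have h1 : ‖(1 : E →L[ℝ] E)‖ ≤ 1 := by
              rw [ContinuousLinearMap.one_def]; exact ContinuousLinearMap.norm_id_le
            gcongr
        _ = (1+x)^L.length := by ring
    have key : (a :: L).prod - 1 = (a - 1) * L.prod + (L.prod - 1) := by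
      rw [List.prod_cons]; noncomm_ring
    rw [key, List.length_cons]
    calc ‖(a-1) * L.prod + (L.prod - 1)‖ ≤ ‖(a-1) * L.prod‖ + ‖L.prod - 1‖ := norm_add_le _ _
      _ ≤ ‖a-1‖ * ‖L.prod‖ + ((1+x)^L.length - 1) := add_le_add (norm_mul_le _ _) hP
      _ ≤ x * (1+x)^L.length + ((1+x)^L.length - 1) :=
          add_le_add (mul_le_mul ha hPn (norm_nonneg _) hx) le_rfl
      _ = (1+x)^(L.length+1) - 1 := by ring

lemma stmt9_sum_aux (n : ℕ) : (∑ j ∈ Finset.Icc 1 n, (n - j)) = ∑ i ∈ Finset.range n, i := by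
  induction n with
  | zero => simp
  | succ n ih =>
    rw [Finset.sum_Icc_succ_top (by omega), Finset.sum_range_succ, Nat.sub_self, add_zero]
    have h1 : (∑ j ∈ Finset.Icc 1 n, (n + 1 - j)) = ∑ j ∈ Finset.Icc 1 n, ((n - j) + 1) := by
      apply Finset.sum_congr rfl
      intro j hj
      rw [Finset.mem_Icc] at hj
      omega
    rw [h1, Finset.sum_add_distrib, ih, Finset.sum_const, Nat.Icc_eq_range', smul_eq_mul, mul_one]
    simp

set_option maxHeartbeats 2000000 in
/-- Lower bound on the epoch matrix of PPM without replacement: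
with `‖Mⱼ‖ ≤ l`, `‖Jₜ‖ ≤ l`, the average `M̄ = (1/n)ΣMⱼ` satisfying `⟨M̄v,v⟩ ≥ μ‖v‖²`,
and `0 < α ≤ μ/(5nl²)`, the operator `H = I + α Σⱼ Bⱼ∘Mⱼ` with
`Bⱼ = (I + αJₙ)∘⋯∘(I + αJⱼ₊₁)` satisfies `‖Hv‖ ≥ (1 + 3nαμ/4)‖v‖`, is bijective, and
its inverse satisfies `‖H⁻¹‖ ≤ 1 − nαμ/2`. -/
theorem stmt_9
    {E : Type*} [NormedAddCommGroup E] [InnerProductSpace ℝ E] [FiniteDimensional ℝ E]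
    (n : ℕ) (hn : 1 ≤ n) (l μ α : ℝ) (hl : 0 < l) (hμ : 0 < μ) (hμl : μ ≤ l)
    (hα0 : 0 < α) (hα : α ≤ μ / (5 * n * l ^ 2))
    (M J : ℕ → (E →L[ℝ] E))
    (hM : ∀ j ∈ Finset.Icc 1 n, ‖M j‖ ≤ l)
    (hJ : ∀ t ∈ Finset.Icc 1 n, ‖J t‖ ≤ l)
    (havg : ∀ v : E, ⟪((n : ℝ)⁻¹ • ∑ j ∈ Finset.Icc 1 n, M j) v, v⟫ ≥ μ * ‖v‖ ^ 2)
    (H : E →L[ℝ] E)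
    (hH : H = 1 + α • ∑ j ∈ Finset.Icc 1 n,
        (((List.range (n - j)).map (fun k => (1 : E →L[ℝ] E) + α • J (n - k))).prod).comp
          (M j)) :
    (∀ v : E, ‖H v‖ ≥ (1 + 3 * n * α * μ / 4) * ‖v‖) ∧
    Function.Bijective (⇑H) ∧
    ∃ Hinv : E →L[ℝ] E, Hinv.comp H = 1 ∧ H.comp Hinv = 1 ∧ ‖Hinv‖ ≤ 1 - n * α * μ / 2 := by
  classical
  have hn1 : (1:ℝ) ≤ (n:ℝ) := by exact_mod_cast hn
  have hnpos : (0:ℝ) < n := by linarith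
  -- numeric facts
  have hd : (0:ℝ) < 5 * n * l ^ 2 := by positivity
  have hα5 : α * (5 * n * l ^ 2) ≤ μ := by
    rw [div_eq_mul_inv] at hα
    calc α * (5 * n * l ^ 2) ≤ (μ * (5 * n * l ^ 2)⁻¹) * (5 * n * l ^ 2) := by gcongr
      _ = μ := by field_simp
  have hαnl2 : (n:ℝ) * α * l ^ 2 ≤ μ / 5 := by nlinarith
  have hαl : α * l ≤ 1 / (5 * n) := by
    rw [le_div_iff₀ (by positivity)]
    nlinarith
  have hnaμ : (n:ℝ) * α * μ ≤ 1 / 5 := by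
    have h1 : μ * (α * (5 * n * l ^ 2)) ≤ μ * μ := mul_le_mul_of_nonneg_left hα5 hμ.le
    have h2 : μ * μ ≤ l * l := mul_le_mul hμl hμl hμ.le hl.le
    nlinarith [sq_nonneg l]
  have hnaμ0 : (0:ℝ) < (n:ℝ) * α * μ := by positivity
  -- operators
  set S : E →L[ℝ] E := ∑ j ∈ Finset.Icc 1 n,
      (((List.range (n - j)).map (fun k => (1 : E →L[ℝ] E) + α • J (n - k))).prod).comp
        (M j) with hSdef
  set T : E →L[ℝ] E := ∑ j ∈ Finset.Icc 1 n, M j with hTdef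
  -- bound on B j - 1
  have hBj : ∀ j ∈ Finset.Icc 1 n,
      ‖((List.range (n - j)).map (fun k => (1 : E →L[ℝ] E) + α • J (n - k))).prod - 1‖
        ≤ 2 * ((n - j : ℕ):ℝ) * (α * l) := by
    intro j hj
    rw [Finset.mem_Icc] at hj
    have hmem : ∀ a ∈ (List.range (n - j)).map
        (fun k => (1 : E →L[ℝ] E) + α • J (n - k)), ‖a - 1‖ ≤ α * l := by
      intro a ha
      rw [List.mem_map] at ha
      obtain ⟨k, hk, rfl⟩ := ha
      rw [List.mem_range] at hk
      have hk1 : 1 ≤ n - k := by omega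
      have hk2 : n - k ≤ n := Nat.sub_le _ _
      have hJk := hJ (n - k) (Finset.mem_Icc.mpr ⟨hk1, hk2⟩)
      have he : (1 : E →L[ℝ] E) + α • J (n - k) - 1 = α • J (n - k) := by abel
      have hns : ‖α • J (n - k)‖ = ‖α‖ * ‖J (n - k)‖ := norm_smul α (J (n - k))
      rw [he, hns, Real.norm_eq_abs, abs_of_pos hα0]
      exact mul_le_mul_of_nonneg_left hJk hα0.le
    have h1 := stmt9_prod_aux (α * l) (by positivity) _ hmem
    rw [List.length_map, List.length_range] at h1
    have hcond : 2 * ((n - j : ℕ):ℝ) * (α * l) ≤ 1 := by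
      have hle : ((n - j : ℕ):ℝ) ≤ (n:ℝ) := by exact_mod_cast Nat.sub_le n j
      have hnj0 : (0:ℝ) ≤ ((n - j : ℕ):ℝ) := Nat.cast_nonneg _
      have h2 : 2 * ((n - j : ℕ):ℝ) * (α * l) ≤ 2 * (n:ℝ) * (α * l) := by nlinarith [mul_pos hα0 hl]
      have h3 : 2 * (n:ℝ) * (α * l) ≤ 2 * (n:ℝ) * (1 / (5 * n)) := by nlinarith
      have h4 : 2 * (n:ℝ) * (1 / (5 * n)) = 2/5 := by field_simp
      linarith
    have h2 := stmt9_pow_aux (α * l) (by positivity) (n - j) hcond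
    calc ‖((List.range (n - j)).map (fun k => (1 : E →L[ℝ] E) + α • J (n - k))).prod - 1‖
        ≤ (1 + α * l) ^ (n - j) - 1 := h1
      _ ≤ 2 * ((n - j : ℕ):ℝ) * (α * l) := by linarith
  -- sum of (n-j)
  have hsum : (∑ j ∈ Finset.Icc 1 n, ((n - j : ℕ):ℝ)) ≤ (n:ℝ)^2 / 2 := by
    have e2 : (∑ i ∈ Finset.range n, i) * 2 = n * (n - 1) := Finset.sum_range_id_mul_two n
    have e4 : (∑ j ∈ Finset.Icc 1 n, (n - j)) * 2 ≤ n * n := by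
      rw [stmt9_sum_aux, e2]
      exact Nat.mul_le_mul_left n (Nat.sub_le n 1)
    have e5 : ((∑ j ∈ Finset.Icc 1 n, (n - j) : ℕ):ℝ) * 2 ≤ (n:ℝ) * n := by exact_mod_cast e4
    rw [Nat.cast_sum] at e5
    nlinarith
  -- bound ‖S - T‖
  have hST : ‖S - T‖ ≤ (n:ℝ) * μ / 5 := by
    have hdiff : S - T = ∑ j ∈ Finset.Icc 1 n,
        ((((List.range (n - j)).map (fun k => (1 : E →L[ℝ] E) + α • J (n - k))).prod - 1).comp
          (M j)) := by
      rw [hSdef, hTdef, ← Finset.sum_sub_distrib]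
      apply Finset.sum_congr rfl
      intro j _
      rw [ContinuousLinearMap.sub_comp, ContinuousLinearMap.one_def, ContinuousLinearMap.id_comp]
    rw [hdiff]
    calc ‖∑ j ∈ Finset.Icc 1 n, ((((List.range (n - j)).map
            (fun k => (1 : E →L[ℝ] E) + α • J (n - k))).prod - 1).comp (M j))‖
        ≤ ∑ j ∈ Finset.Icc 1 n, ‖(((List.range (n - j)).map
            (fun k => (1 : E →L[ℝ] E) + α • J (n - k))).prod - 1).comp (M j)‖ := norm_sum_le _ _
      _ ≤ ∑ j ∈ Finset.Icc 1 n, 2 * ((n - j : ℕ):ℝ) * (α * l) * l := by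
          apply Finset.sum_le_sum
          intro j hj
          calc ‖(((List.range (n - j)).map
                (fun k => (1 : E →L[ℝ] E) + α • J (n - k))).prod - 1).comp (M j)‖
              ≤ ‖((List.range (n - j)).map
                (fun k => (1 : E →L[ℝ] E) + α • J (n - k))).prod - 1‖ * ‖M j‖ :=
                ContinuousLinearMap.opNorm_comp_le _ _
            _ ≤ 2 * ((n - j : ℕ):ℝ) * (α * l) * l := by
                apply mul_le_mul (hBj j hj) (hM j hj) (norm_nonneg _)
                positivity
      _ = (2 * (α * l) * l) * ∑ j ∈ Finset.Icc 1 n, ((n - j : ℕ):ℝ) := by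
          rw [Finset.mul_sum]; apply Finset.sum_congr rfl; intros; ring
      _ ≤ (2 * (α * l) * l) * ((n:ℝ)^2 / 2) := by
          apply mul_le_mul_of_nonneg_left hsum (by positivity)
      _ = (n:ℝ) * ((n:ℝ) * α * l^2) := by ring
      _ ≤ (n:ℝ) * (μ / 5) := mul_le_mul_of_nonneg_left hαnl2 hnpos.le
      _ = (n:ℝ) * μ / 5 := by ring
  -- inner product lower bound
  have key : ∀ v : E, ⟪H v, v⟫ ≥ (1 + 3 * n * α * μ / 4) * ‖v‖ ^ 2 := by
    intro v
    have hHv : H v = v + α • (S v) := by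
      rw [hH]
      simp only [ContinuousLinearMap.add_apply, ContinuousLinearMap.coe_smul',
        Pi.smul_apply, ContinuousLinearMap.one_apply]
    have hTv : ⟪T v, v⟫ ≥ (n:ℝ) * μ * ‖v‖ ^ 2 := by
      have h1 := havg v
      have h2 : ⟪((n : ℝ)⁻¹ • ∑ j ∈ Finset.Icc 1 n, M j) v, v⟫ = (n:ℝ)⁻¹ * ⟪T v, v⟫ := by
        rw [hTdef]
        simp [real_inner_smul_left]
      rw [h2] at h1
      have h3 : (n:ℝ) * (μ * ‖v‖^2) ≤ (n:ℝ) * ((n:ℝ)⁻¹ * ⟪T v, v⟫) :=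
        mul_le_mul_of_nonneg_left h1 hnpos.le
      have h4 : (n:ℝ) * ((n:ℝ)⁻¹ * ⟪T v, v⟫) = ⟪T v, v⟫ := by
        rw [← mul_assoc, mul_inv_cancel₀ (ne_of_gt hnpos), one_mul]
      rw [h4] at h3
      linarith
    have hSTv : ⟪(S - T) v, v⟫ ≥ -((n:ℝ) * μ / 5 * ‖v‖ ^ 2) := by
      have h1 : |⟪(S - T) v, v⟫| ≤ ‖(S - T) v‖ * ‖v‖ := abs_real_inner_le_norm _ _
      have h2 : ‖(S - T) v‖ ≤ ‖S - T‖ * ‖v‖ := (S - T).le_opNorm v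
      have h4 := neg_abs_le ⟪(S - T) v, v⟫
      have hv0 := norm_nonneg v
      have hv1 := norm_nonneg ((S - T) v)
      have hsq : ‖v‖ ^ 2 = ‖v‖ * ‖v‖ := sq ‖v‖
      nlinarith [norm_nonneg (S - T)]
    have hSv : ⟪S v, v⟫ = ⟪T v, v⟫ + ⟪(S - T) v, v⟫ := by
      rw [ContinuousLinearMap.sub_apply, inner_sub_left]; ring
    rw [hHv, inner_add_left, real_inner_smul_left, real_inner_self_eq_norm_sq, hSv]
    nlinarith [sq_nonneg ‖v‖]
  set c : ℝ := 1 + 3 * n * α * μ / 4 with hc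
  have hcpos : 0 < c := by positivity
  have lower : ∀ v : E, ‖H v‖ ≥ c * ‖v‖ := by
    intro v
    rcases eq_or_ne v 0 with rfl | hv
    · simp
    · have hvpos : 0 < ‖v‖ := norm_pos_iff.mpr hv
      have h1 := key v
      have h2 : ⟪H v, v⟫ ≤ ‖H v‖ * ‖v‖ := real_inner_le_norm _ _
      have h3 : c * ‖v‖^2 ≤ ‖H v‖ * ‖v‖ := le_trans h1 h2
      rw [sq] at h3
      exact le_of_mul_le_mul_right (by nlinarith) hvpos
  have hinj : Function.Injective (⇑H) := by
    intro v w hvw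
    have h0 : H (v - w) = 0 := by rw [map_sub, hvw, sub_self]
    have h1 := lower (v - w)
    rw [h0, norm_zero] at h1
    have h2 : ‖v - w‖ ≤ 0 := by nlinarith [norm_nonneg (v - w)]
    have h3 : v - w = 0 := norm_le_zero_iff.mp (by linarith)
    exact sub_eq_zero.mp h3
  have hsurj : Function.Surjective (⇑H) :=
    (LinearMap.injective_iff_surjective (f := (H : E →ₗ[ℝ] E))).mp hinj
  have hbij : Function.Bijective (⇑H) := ⟨hinj, hsurj⟩
  refine ⟨lower, hbij, ?_⟩
  let e : E ≃ₗ[ℝ] E := LinearEquiv.ofBijective (H : E →ₗ[ℝ] E) hbij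
  let Hinv : E →L[ℝ] E := LinearMap.toContinuousLinearMap e.symm.toLinearMap
  have hHinvL : ∀ w : E, H (Hinv w) = w := fun w => e.apply_symm_apply w
  have hHinvR : ∀ v : E, Hinv (H v) = v := fun v => e.symm_apply_apply v
  have ht : (0:ℝ) ≤ 1 - n * α * μ / 2 := by linarith
  refine ⟨Hinv, ?_, ?_, ?_⟩
  · ext v; exact hHinvR v
  · ext w; exact hHinvL w
  · apply ContinuousLinearMap.opNorm_le_bound _ ht
    intro w
    have h1 := lower (Hinv w)
    rw [hHinvL w] at h1
    have hcc : 1 ≤ c * (1 - n * α * μ / 2) := by rw [hc]; nlinarith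
    have h2 : (1 - n * α * μ / 2) * (c * ‖Hinv w‖) ≤ (1 - n * α * μ / 2) * ‖w‖ :=
      mul_le_mul_of_nonneg_left h1 ht
    nlinarith [norm_nonneg (Hinv w)]
end

section
/- Let E be a finite-dimensional real inner product space, n ≥ 1, and ω₁, …, ωₙ : E → E l-Lipschitz maps whose average ν = (1/n)·Σᵢ ωᵢ is μ-strongly monotone with 0 < μ ≤ l; let z* be the unique root of ν and σ*² = (1/n)·Σᵢ ‖ωᵢ(z*)‖². Fix z₀ ∈ E, K ≥ 1, and 0 < α ≤ μ/(5nl²). For each K-tuple τ = (τ₁, …, τ_K) of permutations of {1,…,n}, let z^{K+1}₀(τ) denote the GDA-without-replacement output after K epochs started at z₀. Then, averaging over all (n!)^K tuples (i.e., over i.i.d. uniformly random permutations, as in Random Reshuffling), (1/(n!)^K)·Σ_τ ‖z^{K+1}₀(τ) − z*‖² ≤ 2·e^{−nαμK}·‖z₀ − z*‖² + l²σ*²α³n²K/μ. -/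
open scoped RealInnerProductSpace

/-- Iterates within one epoch of GDA without replacement: starting from `z`, perform
`i` steps `z ↦ z − α·ω_{τ(j)}(z)` for `j = 1, …, i` (indices via `Fin n`). -/
noncomputable def gdaStep {E : Type*} [NormedAddCommGroup E] [NormedSpace ℝ E] {n : ℕ}
    (ω : Fin n → E → E) (α : ℝ) (τ : Equiv.Perm (Fin n)) (z : E) : ℕ → E
  | 0 => z
  | i + 1 =>
    let w := gdaStep ω α τ z i
    if h : i < n then w - α • ω (τ ⟨i, h⟩) w else w

/-- Epoch iterates of GDA without replacement: `gdaEpochs ω α τs z₀ k` is the iterate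
`z^{k+1}₀` after `k` full epochs, epoch `j` using the permutation `τs j`. -/
noncomputable def gdaEpochs {E : Type*} [NormedAddCommGroup E] [NormedSpace ℝ E] {n : ℕ}
    (ω : Fin n → E → E) (α : ℝ) (τs : ℕ → Equiv.Perm (Fin n)) (z0 : E) : ℕ → E
  | 0 => z0
  | k + 1 => gdaStep ω α (τs k) (gdaEpochs ω α τs z0 k) n

open Finset



set_option maxHeartbeats 1000000 in
lemma perm_sum_single {n : ℕ} (f : Fin (n+1) → ℝ) (j : Fin (n+1)) :
    ∑ τ : Equiv.Perm (Fin (n+1)), f (τ j) = (n.factorial : ℝ) * ∑ a, f a := by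
  have h0 : ∑ τ : Equiv.Perm (Fin (n+1)), f (τ j) = ∑ τ : Equiv.Perm (Fin (n+1)), f (τ 0) := by
    rw [← Equiv.sum_comp (Equiv.mulRight (Equiv.swap j 0)) (fun τ : Equiv.Perm (Fin (n+1)) => f (τ 0))]
    simp [Equiv.Perm.mul_apply]
  rw [h0, ← Equiv.sum_comp (Equiv.Perm.decomposeFin.symm) (fun τ : Equiv.Perm (Fin (n+1)) => f (τ 0))]
  rw [Fintype.sum_prod_type]
  simp only [Equiv.Perm.decomposeFin_symm_apply_zero, Finset.sum_const, nsmul_eq_mul,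
    Finset.card_univ, Fintype.card_perm, Fintype.card_fin]
  rw [Finset.mul_sum]


set_option maxHeartbeats 1000000 in
lemma perm_sum_pair {n : ℕ} (F : Fin (n+2) → Fin (n+2) → ℝ) (j j' : Fin (n+2)) (hjj : j ≠ j') :
    ∑ τ : Equiv.Perm (Fin (n+2)), F (τ j) (τ j') =
      (n.factorial : ℝ) * ∑ a, ∑ b ∈ univ.erase a, F a b := by
  obtain ⟨σ, hσ0, hσ1⟩ : ∃ σ : Equiv.Perm (Fin (n+2)), σ 0 = j ∧ σ 1 = j' := by
    set j₂ := Equiv.swap 0 j j' with hj₂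
    have hj₂0 : j₂ ≠ 0 := by
      intro h
      apply hjj
      have := congrArg (Equiv.swap 0 j) h
      rw [hj₂, Equiv.swap_apply_self, Equiv.swap_apply_left] at this
      exact this.symm
    refine ⟨Equiv.swap 0 j * Equiv.swap 1 j₂, ?_, ?_⟩
    · rw [Equiv.Perm.mul_apply, Equiv.swap_apply_of_ne_of_ne (by simp) (Ne.symm hj₂0),
        Equiv.swap_apply_left]
    · rw [Equiv.Perm.mul_apply, Equiv.swap_apply_left, hj₂, Equiv.swap_apply_self]
  have h0 : ∑ τ : Equiv.Perm (Fin (n+2)), F (τ j) (τ j')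
      = ∑ τ : Equiv.Perm (Fin (n+2)), F (τ 0) (τ 1) := by
    rw [← Equiv.sum_comp (Equiv.mulRight σ)
      (fun τ : Equiv.Perm (Fin (n+2)) => F (τ 0) (τ 1))]
    exact Finset.sum_congr rfl (fun τ _ => by
      simp [Equiv.Perm.mul_apply, hσ0, hσ1])
  rw [h0, ← Equiv.sum_comp (Equiv.Perm.decomposeFin.symm)
    (fun τ : Equiv.Perm (Fin (n+2)) => F (τ 0) (τ 1)), Fintype.sum_prod_type]
  rw [Finset.mul_sum]
  apply Finset.sum_congr rfl
  intro a _
  have hone : ∀ (π : Equiv.Perm (Fin (n+1))),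
      (Equiv.Perm.decomposeFin.symm (a, π)) 1 = Equiv.swap 0 a (π 0).succ := by
    intro π
    have h : (1 : Fin (n+2)) = (0 : Fin (n+1)).succ := by simp
    rw [h, Equiv.Perm.decomposeFin_symm_apply_succ]
  have step1 : ∑ π : Equiv.Perm (Fin (n+1)),
      F ((Equiv.Perm.decomposeFin.symm (a, π)) 0) ((Equiv.Perm.decomposeFin.symm (a, π)) 1)
      = ∑ π : Equiv.Perm (Fin (n+1)), (fun b : Fin (n+1) => F a (Equiv.swap 0 a b.succ)) (π 0) :=
    Finset.sum_congr rfl (fun π _ => by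
      rw [Equiv.Perm.decomposeFin_symm_apply_zero, hone])
  rw [step1, perm_sum_single (fun b : Fin (n+1) => F a (Equiv.swap 0 a b.succ)) 0]
  congr 1
  have h2 : ∑ c : Fin (n+2), F a (Equiv.swap 0 a c)
      = F a (Equiv.swap 0 a 0) + ∑ b : Fin (n+1), F a (Equiv.swap 0 a b.succ) :=
    Fin.sum_univ_succ _
  have h3 : ∑ c : Fin (n+2), F a (Equiv.swap 0 a c) = ∑ c : Fin (n+2), F a c :=
    Equiv.sum_comp (Equiv.swap 0 a) (fun c => F a c)
  have h4 : ∑ c : Fin (n+2), F a c = F a a + ∑ b ∈ univ.erase a, F a b :=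
    (Finset.add_sum_erase univ (F a) (mem_univ a)).symm
  rw [Equiv.swap_apply_left] at h2
  linarith [h2, h3, h4]

set_option maxHeartbeats 1000000 in
lemma perm_subset_sum_sq {n : ℕ} {E : Type*} [NormedAddCommGroup E] [InnerProductSpace ℝ E]
    (v : Fin (n+2) → E) (hv : ∑ a, v a = 0) (J : Finset (Fin (n+2))) :
    ∑ τ : Equiv.Perm (Fin (n+2)), ‖∑ j ∈ J, v (τ j)‖^2
      = (n.factorial : ℝ) * ((J.card : ℝ) * ((n:ℝ)+2 - (J.card:ℝ))) * ∑ a, ‖v a‖^2 := by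
  set V : ℝ := ∑ a, ‖v a‖^2 with hV
  have expand : ∀ τ : Equiv.Perm (Fin (n+2)), ‖∑ j ∈ J, v (τ j)‖^2
      = ∑ j ∈ J, ∑ k ∈ J, ⟪v (τ j), v (τ k)⟫ := by
    intro τ
    rw [← real_inner_self_eq_norm_sq, sum_inner]
    exact Finset.sum_congr rfl (fun j _ => inner_sum _ _ _)
  calc ∑ τ : Equiv.Perm (Fin (n+2)), ‖∑ j ∈ J, v (τ j)‖^2
      = ∑ j ∈ J, ∑ k ∈ J, ∑ τ : Equiv.Perm (Fin (n+2)), ⟪v (τ j), v (τ k)⟫ := by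
        rw [Finset.sum_congr rfl (fun τ _ => expand τ)]
        rw [Finset.sum_comm]
        exact Finset.sum_congr rfl (fun j _ => Finset.sum_comm)
    _ = ∑ j ∈ J, (((n+1).factorial : ℝ) * V + (((J.card:ℝ) - 1) * (-(n.factorial * V)))) := by
        apply Finset.sum_congr rfl
        intro j hj
        have hsplit : ∑ k ∈ J, ∑ τ : Equiv.Perm (Fin (n+2)), ⟪v (τ j), v (τ k)⟫
            = (∑ τ : Equiv.Perm (Fin (n+2)), ⟪v (τ j), v (τ j)⟫)
              + ∑ k ∈ J.erase j, ∑ τ : Equiv.Perm (Fin (n+2)), ⟪v (τ j), v (τ k)⟫ :=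
          (Finset.add_sum_erase J _ hj).symm
        rw [hsplit]
        have hdiag : (∑ τ : Equiv.Perm (Fin (n+2)), ⟪v (τ j), v (τ j)⟫)
            = ((n+1).factorial : ℝ) * V := by
          have := perm_sum_single (n := n+1) (fun b => ⟪v b, v b⟫) j
          simpa [real_inner_self_eq_norm_sq] using this
        have hoff : ∀ k ∈ J.erase j,
            (∑ τ : Equiv.Perm (Fin (n+2)), ⟪v (τ j), v (τ k)⟫) = -(n.factorial * V) := by
          intro k hk
          have hjk : j ≠ k := (Finset.ne_of_mem_erase hk).symm
          rw [perm_sum_pair (fun a b => ⟪v a, v b⟫) j k hjk]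
          have inner_row : ∀ a : Fin (n+2), ∑ b ∈ univ.erase a, ⟪v a, v b⟫ = -‖v a‖^2 := by
            intro a
            rw [← inner_sum]
            have : ∑ b ∈ univ.erase a, v b = -v a := by
              have h := Finset.add_sum_erase univ v (mem_univ a)
              rw [hv] at h
              exact eq_neg_of_add_eq_zero_right h
            rw [this, inner_neg_right, real_inner_self_eq_norm_sq]
          rw [Finset.sum_congr rfl (fun a _ => inner_row a)]
          rw [Finset.sum_neg_distrib, ← hV]
          ring
        rw [Finset.sum_congr rfl hoff, hdiag, Finset.sum_const, Finset.card_erase_of_mem hj,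
          nsmul_eq_mul]
        congr 1
        rw [Nat.cast_sub (Finset.one_le_card.mpr ⟨j, hj⟩)]
        push_cast
        ring
    _ = (n.factorial : ℝ) * ((J.card : ℝ) * ((n:ℝ)+2 - (J.card:ℝ))) * V := by
        rw [Finset.sum_const, nsmul_eq_mul]
        have : ((n+1).factorial : ℝ) = ((n:ℝ)+1) * (n.factorial:ℝ) := by
          rw [Nat.factorial_succ]; push_cast; ring
        rw [this]; ring



section StepFacts
variable {E : Type*} [NormedAddCommGroup E] [NormedSpace ℝ E] {n : ℕ}
  (ω : Fin n → E → E) (α : ℝ) (τ : Equiv.Perm (Fin n)) (z : E)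

lemma gdaStep_zero : gdaStep ω α τ z 0 = z := rfl

lemma gdaStep_succ (i : ℕ) (h : i < n) :
    gdaStep ω α τ z (i+1) = gdaStep ω α τ z i - α • ω (τ ⟨i, h⟩) (gdaStep ω α τ z i) := by
  simp [gdaStep, h]

def Jset (n i : ℕ) : Finset (Fin n) := univ.filter (fun j : Fin n => (j : ℕ) < i)

lemma Jset_zero : Jset n 0 = ∅ := by
  ext j; simp [Jset]

lemma Jset_succ (i : ℕ) (h : i < n) :
    Jset n (i+1) = insert ⟨i, h⟩ (Jset n i) := by
  ext j
  simp only [Jset, mem_filter, mem_univ, true_and, mem_insert, Fin.ext_iff]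
  omega

lemma Jset_notMem (i : ℕ) (h : i < n) : (⟨i, h⟩ : Fin n) ∉ Jset n i := by
  simp [Jset]

lemma Jset_full : Jset n n = univ := by
  ext j; simp [Jset, j.isLt]

lemma Jset_card (i : ℕ) (h : i ≤ n) : (Jset n i).card = i := by
  induction i with
  | zero => simp [Jset_zero]
  | succ k ih =>
    rw [Jset_succ k (by omega), Finset.card_insert_of_notMem (Jset_notMem k (by omega)),
      ih (by omega)]

lemma gdaStep_telescope (i : ℕ) (h : i ≤ n) :
    gdaStep ω α τ z i = z - α • ∑ j ∈ Jset n i, ω (τ j) (gdaStep ω α τ z (j : ℕ)) := by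
  induction i with
  | zero => simp [gdaStep_zero, Jset_zero]
  | succ k ih =>
    have hk : k < n := by omega
    rw [Jset_succ k hk, Finset.sum_insert (Jset_notMem k hk), gdaStep_succ ω α τ z k hk]
    set tk := ω (τ ⟨k, hk⟩) (gdaStep ω α τ z k) with htk
    rw [ih (by omega), smul_add]
    abel

end StepFacts

lemma sum_range_cast (n : ℕ) : ∑ i ∈ range n, (i:ℝ) = (n:ℝ)*((n:ℝ)-1)/2 := by
  induction n with
  | zero => simp
  | succ k ih => rw [Finset.sum_range_succ, ih]; push_cast; ring

lemma sum_range_sq_cast (n : ℕ) : ∑ i ∈ range n, (i:ℝ)^2 = (n:ℝ)*((n:ℝ)-1)*(2*(n:ℝ)-1)/6 := by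
  induction n with
  | zero => simp
  | succ k ih => rw [Finset.sum_range_succ, ih]; push_cast; ring

lemma sum_id_mul_rev_le (n : ℕ) (hn : 2 ≤ n) :
    ∑ i ∈ range n, (i:ℝ)*((n:ℝ) - (i:ℝ)) ≤ ((n:ℝ)-1)*(n:ℝ)^2/4 := by
  have h : ∑ i ∈ range n, (i:ℝ)*((n:ℝ) - (i:ℝ))
      = (n:ℝ) * (∑ i ∈ range n, (i:ℝ)) - ∑ i ∈ range n, (i:ℝ)^2 := by
    rw [Finset.mul_sum, ← Finset.sum_sub_distrib]
    exact Finset.sum_congr rfl (fun i _ => by ring)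
  rw [h, sum_range_cast, sum_range_sq_cast]
  have hn2 : (2:ℝ) ≤ (n:ℝ) := by exact_mod_cast hn
  nlinarith [mul_nonneg (mul_nonneg (by linarith : (0:ℝ) ≤ (n:ℝ)-1) (by linarith : (0:ℝ) ≤ (n:ℝ))) (by linarith : (0:ℝ) ≤ (n:ℝ)-2)]

set_option maxHeartbeats 4000000 in
lemma epoch_bound {E : Type*} [NormedAddCommGroup E] [InnerProductSpace ℝ E]
    (n : ℕ) (hn : 1 ≤ n) (ω : Fin n → E → E) (l μ : ℝ) (hμ : 0 < μ) (hμl : μ ≤ l)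
    (hlip : ∀ (i : Fin n) (z₁ z₂ : E), ‖ω i z₁ - ω i z₂‖ ≤ l * ‖z₁ - z₂‖)
    (ν : E → E) (hν : ∀ z, ν z = (n : ℝ)⁻¹ • ∑ i, ω i z)
    (hmono : ∀ z₁ z₂, ⟪ν z₁ - ν z₂, z₁ - z₂⟫ ≥ μ * ‖z₁ - z₂‖ ^ 2)
    (zs : E) (hzs : ν zs = 0)
    (σ2 : ℝ) (hσ2 : σ2 = (n : ℝ)⁻¹ * ∑ i, ‖ω i zs‖ ^ 2)
    (α : ℝ) (hα0 : 0 < α) (hα5 : α * (n:ℝ) * l ^ 2 ≤ μ / 5) (z : E) :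
    ∑ τ : Equiv.Perm (Fin n), ‖gdaStep ω α τ z n - zs‖ ^ 2
      ≤ (n.factorial : ℝ) *
        (Real.exp (-((n:ℝ) * α * μ)) * ‖z - zs‖ ^ 2 + l ^ 2 * σ2 * α ^ 3 * (n:ℝ) ^ 2 / μ) := by
  have hl : (0:ℝ) < l := lt_of_lt_of_le hμ hμl
  have hn0 : (0:ℝ) < (n:ℝ) := by exact_mod_cast hn
  set x : ℝ := (n:ℝ) * α * μ with hxdef
  have hx0 : 0 < x := by positivity
  have hx15 : x ≤ 1/5 := by
    nlinarith [mul_le_mul_of_nonneg_right hα5 hμ.le, mul_pos hl hl, sq_nonneg (l-μ),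
      mul_pos (mul_pos hn0 hα0) hμ]
  have haln : α * l * (n:ℝ) ≤ 1/5 := by nlinarith
  have hn2a2l2 : (n:ℝ)^2 * α^2 * l^2 ≤ x/5 := by nlinarith [mul_le_mul_of_nonneg_left hα5 (mul_pos hn0 hα0).le]
  have hσ2nn : 0 ≤ σ2 := by
    rw [hσ2]; positivity
  set R : ℝ := ‖z - zs‖ with hRdef
  have hR0 : 0 ≤ R := norm_nonneg _
  set u : E := (z - zs) - (α * (n:ℝ)) • ν z with hudef
  -- bound on ‖u‖
  have hνz : ‖ν z‖ ≤ l * R := by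
    have h1 : ν z = (n:ℝ)⁻¹ • ∑ i, (ω i z - ω i zs) := by
      rw [Finset.sum_sub_distrib, smul_sub, ← hν, ← hν, hzs, sub_zero]
    rw [h1, norm_smul]
    have h2 : ‖∑ i, (ω i z - ω i zs)‖ ≤ (n:ℝ) * (l * R) := by
      calc ‖∑ i : Fin n, (ω i z - ω i zs)‖ ≤ ∑ i : Fin n, ‖ω i z - ω i zs‖ :=
            norm_sum_le _ _
        _ ≤ ∑ _i : Fin n, l * R := Finset.sum_le_sum (fun i _ => hlip i z zs)
        _ = (n:ℝ) * (l * R) := by simp [Finset.sum_const, mul_comm]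
    have h3 : ‖((n:ℝ)⁻¹ : ℝ)‖ = (n:ℝ)⁻¹ := by
      rw [Real.norm_eq_abs, abs_of_pos (by positivity)]
    rw [h3]
    calc (n:ℝ)⁻¹ * ‖∑ i, (ω i z - ω i zs)‖ ≤ (n:ℝ)⁻¹ * ((n:ℝ) * (l * R)) := by
          apply mul_le_mul_of_nonneg_left h2 (by positivity)
      _ = l * R := by field_simp
  have hνz2 : ‖ν z‖^2 ≤ l^2 * R^2 := by
    calc ‖ν z‖^2 ≤ (l*R)^2 := pow_le_pow_left₀ (norm_nonneg _) hνz 2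
      _ = l^2 * R^2 := by ring
  have hmono' : ⟪ν z, z - zs⟫ ≥ μ * R^2 := by
    have := hmono z zs
    rwa [hzs, sub_zero] at this
  have hu2 : ‖u‖^2 ≤ (1 - 2*x + x/5) * R^2 := by
    have hexp : ‖u‖^2 = R^2 - 2 * (α * (n:ℝ)) * ⟪ν z, z - zs⟫ + (α*(n:ℝ))^2 * ‖ν z‖^2 := by
      rw [hudef, norm_sub_sq_real, real_inner_smul_right, norm_smul, hRdef]
      rw [Real.norm_eq_abs, abs_of_pos (by positivity), real_inner_comm]
      ring
    have h2 : (α*(n:ℝ))^2 * ‖ν z‖^2 ≤ (x/5) * R^2 := by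
      calc (α*(n:ℝ))^2 * ‖ν z‖^2 ≤ (α*(n:ℝ))^2 * (l^2 * R^2) := by
            apply mul_le_mul_of_nonneg_left hνz2 (by positivity)
        _ = ((n:ℝ)^2 * α^2 * l^2) * R^2 := by ring
        _ ≤ (x/5) * R^2 := mul_le_mul_of_nonneg_right hn2a2l2 (sq_nonneg R)
    have h3 : 2 * (α * (n:ℝ)) * (μ * R^2) ≤ 2 * (α * (n:ℝ)) * ⟪ν z, z - zs⟫ := by
      apply mul_le_mul_of_nonneg_left hmono' (by positivity)
    have hxR : 2 * (α * (n:ℝ)) * (μ * R^2) = 2 * x * R^2 := by rw [hxdef]; ring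
    linarith [hexp, h2, h3, hxR]
  have huR : ‖u‖ ≤ R := by
    refine le_of_pow_le_pow_left₀ (two_ne_zero) hR0 (le_trans hu2 ?_)
    have h := mul_nonneg hx0.le (sq_nonneg R)
    linarith

  -- pointwise (per-permutation) bound
  have key : ∀ τ : Equiv.Perm (Fin n), ‖gdaStep ω α τ z n - zs‖ ^ 2
      ≤ (1 - x) * R^2 + ((25:ℝ)/8) * (α^4*l^2/x + α^4*l^2) *
          (∑ i : Fin n, ‖∑ j ∈ Jset n (i:ℕ), ω (τ j) zs‖)^2 := by
    intro τ
    set w : ℕ → E := fun i => gdaStep ω α τ z i with hwdef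
    set P : Fin n → ℝ := fun i => ‖∑ j ∈ Jset n (i:ℕ), ω (τ j) zs‖ with hPdef
    set Q : ℝ := ∑ i : Fin n, P i with hQdef
    set b : Fin n → ℝ := fun i => ‖w (i:ℕ) - z‖ with hbdef
    set B : ℝ := ∑ i : Fin n, b i with hBdef
    have hQnn : 0 ≤ Q := Finset.sum_nonneg (fun i _ => norm_nonneg _)
    have hBnn : 0 ≤ B := Finset.sum_nonneg (fun i _ => norm_nonneg _)
    have htel' : ∀ i : ℕ, i ≤ n → w i = z - α • ∑ j ∈ Jset n i, ω (τ j) (w (j:ℕ)) :=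
      fun i h => gdaStep_telescope ω α τ z i h
    -- step displacement bound
    have hb : ∀ i : Fin n, b i ≤ α * P i + α*l*((i:ℕ):ℝ)*R + α*l*B := by
      intro i
      have hbi : b i = α * ‖∑ j ∈ Jset n (i:ℕ), ω (τ j) (w (j:ℕ))‖ := by
        have hsub : w (i:ℕ) - z = -(α • ∑ j ∈ Jset n (i:ℕ), ω (τ j) (w (j:ℕ))) := by
          rw [htel' (i:ℕ) (le_of_lt i.isLt)]
          abel
        show ‖w (i:ℕ) - z‖ = _
        rw [hsub, norm_neg, norm_smul, Real.norm_eq_abs, abs_of_pos hα0]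
      have hsplit : ‖∑ j ∈ Jset n (i:ℕ), ω (τ j) (w (j:ℕ))‖
          ≤ P i + ∑ j ∈ Jset n (i:ℕ), l * ‖w (j:ℕ) - zs‖ := by
        have hdec : ∑ j ∈ Jset n (i:ℕ), ω (τ j) (w (j:ℕ))
            = (∑ j ∈ Jset n (i:ℕ), ω (τ j) zs)
              + ∑ j ∈ Jset n (i:ℕ), (ω (τ j) (w (j:ℕ)) - ω (τ j) zs) := by
          rw [← Finset.sum_add_distrib]
          exact Finset.sum_congr rfl (fun j _ => by abel)
        rw [hdec]
        calc ‖(∑ j ∈ Jset n (i:ℕ), ω (τ j) zs)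
              + ∑ j ∈ Jset n (i:ℕ), (ω (τ j) (w (j:ℕ)) - ω (τ j) zs)‖
            ≤ ‖∑ j ∈ Jset n (i:ℕ), ω (τ j) zs‖
              + ‖∑ j ∈ Jset n (i:ℕ), (ω (τ j) (w (j:ℕ)) - ω (τ j) zs)‖ := norm_add_le _ _
          _ ≤ P i + ∑ j ∈ Jset n (i:ℕ), l * ‖w (j:ℕ) - zs‖ := by
              apply add_le_add (le_of_eq rfl)
              calc ‖∑ j ∈ Jset n (i:ℕ), (ω (τ j) (w (j:ℕ)) - ω (τ j) zs)‖
                  ≤ ∑ j ∈ Jset n (i:ℕ), ‖ω (τ j) (w (j:ℕ)) - ω (τ j) zs‖ := norm_sum_le _ _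
                _ ≤ ∑ j ∈ Jset n (i:ℕ), l * ‖w (j:ℕ) - zs‖ :=
                    Finset.sum_le_sum (fun j _ => hlip (τ j) _ _)
      have hwzs : ∀ j : Fin n, ‖w (j:ℕ) - zs‖ ≤ R + b j := by
        intro j
        calc ‖w (j:ℕ) - zs‖ ≤ ‖w (j:ℕ) - z‖ + ‖z - zs‖ := norm_sub_le_norm_sub_add_norm_sub _ _ _
          _ = R + b j := by rw [hRdef, hbdef]; ring
      have hsum2 : ∑ j ∈ Jset n (i:ℕ), l * ‖w (j:ℕ) - zs‖ ≤ l * (((i:ℕ):ℝ) * R + B) := by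
        calc ∑ j ∈ Jset n (i:ℕ), l * ‖w (j:ℕ) - zs‖
            ≤ ∑ j ∈ Jset n (i:ℕ), l * (R + b j) :=
              Finset.sum_le_sum (fun j _ => mul_le_mul_of_nonneg_left (hwzs j) hl.le)
          _ = ∑ j ∈ Jset n (i:ℕ), (l*R + l * b j) :=
              Finset.sum_congr rfl (fun j _ => by ring)
          _ = (((Jset n (i:ℕ)).card : ℝ)) * (l*R) + l * ∑ j ∈ Jset n (i:ℕ), b j := by
              rw [Finset.sum_add_distrib, Finset.sum_const, nsmul_eq_mul, Finset.mul_sum]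
          _ = l * (((Jset n (i:ℕ)).card : ℝ) * R + ∑ j ∈ Jset n (i:ℕ), b j) := by ring
          _ ≤ l * (((i:ℕ):ℝ) * R + B) := by
              apply mul_le_mul_of_nonneg_left _ hl.le
              apply add_le_add
              · rw [Jset_card (i:ℕ) (le_of_lt i.isLt)]
              · exact Finset.sum_le_sum_of_subset_of_nonneg (Finset.subset_univ _)
                  (fun j _ _ => norm_nonneg _)
      calc b i = α * ‖∑ j ∈ Jset n (i:ℕ), ω (τ j) (w (j:ℕ))‖ := hbi
        _ ≤ α * (P i + l * (((i:ℕ):ℝ) * R + B)) := by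
            apply mul_le_mul_of_nonneg_left _ hα0.le
            calc ‖∑ j ∈ Jset n (i:ℕ), ω (τ j) (w (j:ℕ))‖
                ≤ P i + ∑ j ∈ Jset n (i:ℕ), l * ‖w (j:ℕ) - zs‖ := hsplit
              _ ≤ P i + l * (((i:ℕ):ℝ) * R + B) := add_le_add (le_refl _) hsum2
        _ = α * P i + α*l*((i:ℕ):ℝ)*R + α*l*B := by ring
    -- sum of indices
    have hsi : ∑ i : Fin n, ((i:ℕ):ℝ) ≤ (n:ℝ)^2/2 := by
      rw [Fin.sum_univ_eq_sum_range (fun i => (i:ℝ)) n, sum_range_cast]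
      nlinarith [hn0]
    -- bound on B
    have hB : B ≤ (5/4)*α*Q + (5/8)*α*l*(n:ℝ)^2*R := by
      have h1 : B ≤ α*Q + α*l*((n:ℝ)^2/2)*R + α*l*(n:ℝ)*B := by
        calc B = ∑ i : Fin n, b i := hBdef
          _ ≤ ∑ i : Fin n, (α * P i + α*l*((i:ℕ):ℝ)*R + α*l*B) :=
              Finset.sum_le_sum (fun i _ => hb i)
          _ = α*Q + (α*l*R) * (∑ i : Fin n, ((i:ℕ):ℝ)) + (n:ℝ)*(α*l*B) := by
              rw [Finset.sum_congr rfl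
                (fun i _ => (by ring :
                  α * P i + α*l*((i:ℕ):ℝ)*R + α*l*B = α * P i + (α*l*R)*((i:ℕ):ℝ) + α*l*B))]
              rw [Finset.sum_add_distrib, Finset.sum_add_distrib, ← Finset.mul_sum,
                ← Finset.mul_sum, Finset.sum_const, Finset.card_univ, Fintype.card_fin,
                nsmul_eq_mul, ← hQdef]
          _ ≤ α*Q + α*l*((n:ℝ)^2/2)*R + α*l*(n:ℝ)*B := by
              have h := mul_le_mul_of_nonneg_left hsi (mul_nonneg (mul_nonneg hα0.le hl.le) hR0)
              linarith [h]
      have h2 : α*l*(n:ℝ)*B ≤ (1/5)*B := mul_le_mul_of_nonneg_right haln hBnn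
      linarith [h1, h2]
    -- final step bound
    have hwn : ‖w n - zs‖ ≤ ‖u‖ + α*l*B := by
      have htel := htel' n (le_refl n)
      rw [Jset_full] at htel
      have hsum_z : ∑ j : Fin n, ω (τ j) z = (n:ℝ) • ν z := by
        rw [hν z, smul_smul, mul_inv_cancel₀ (ne_of_gt hn0), one_smul]
        exact Equiv.sum_comp τ (fun a => ω a z)
      have hwne : w n - zs = u - α • (∑ j : Fin n, (ω (τ j) (w (j:ℕ)) - ω (τ j) z)) := by
        rw [htel, hudef, Finset.sum_sub_distrib, smul_sub, hsum_z, smul_smul]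
        abel
      rw [hwne]
      calc ‖u - α • (∑ j : Fin n, (ω (τ j) (w (j:ℕ)) - ω (τ j) z))‖
          ≤ ‖u‖ + ‖α • (∑ j : Fin n, (ω (τ j) (w (j:ℕ)) - ω (τ j) z))‖ := norm_sub_le _ _
        _ ≤ ‖u‖ + α*l*B := by
            apply add_le_add (le_refl _)
            rw [norm_smul, Real.norm_eq_abs, abs_of_pos hα0]
            have : ‖∑ j : Fin n, (ω (τ j) (w (j:ℕ)) - ω (τ j) z)‖ ≤ l * B := by
              calc ‖∑ j : Fin n, (ω (τ j) (w (j:ℕ)) - ω (τ j) z)‖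
                  ≤ ∑ j : Fin n, ‖ω (τ j) (w (j:ℕ)) - ω (τ j) z‖ := norm_sum_le _ _
                _ ≤ ∑ j : Fin n, l * b j := Finset.sum_le_sum (fun j _ => hlip (τ j) _ _)
                _ = l * B := by rw [hBdef, Finset.mul_sum]
            exact le_trans (mul_le_mul_of_nonneg_left this hα0.le) (le_of_eq (by ring))
    -- assemble
    have hwn2 : ‖w n - zs‖^2 ≤ (‖u‖ + α*l*B)^2 :=
      pow_le_pow_left₀ (norm_nonneg _) hwn 2
    have young : (5/2)*α^2*l*R*Q ≤ (x/2)*R^2 + (25/8)*(α^4*l^2/x)*Q^2 := by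
      have hy : 0 ≤ (x*R - (5/2)*α^2*l*Q)^2 := sq_nonneg _
      have hxq : x * ((x/2)*R^2 + (25/8)*(α^4*l^2/x)*Q^2 - (5/2)*α^2*l*R*Q)
          = (1/2)*(x*R - (5/2)*α^2*l*Q)^2 := by
        field_simp
        ring
      have hD : x * 0 ≤ x * ((x/2)*R^2 + (25/8)*(α^4*l^2/x)*Q^2 - (5/2)*α^2*l*R*Q) := by
        rw [hxq]; linarith [hy]
      have := le_of_mul_le_mul_left hD hx0
      linarith [this]
    have hcross : 2*(α*l)*‖u‖*B ≤ (5/2)*α^2*l*R*Q + (5/4)*α^2*l^2*(n:ℝ)^2*R^2 := by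
      have h1 : ‖u‖ * B ≤ R * ((5/4)*α*Q + (5/8)*α*l*(n:ℝ)^2*R) := by
        apply mul_le_mul huR hB hBnn hR0
      have h2 := mul_le_mul_of_nonneg_left h1
        (by positivity : (0:ℝ) ≤ 2*(α*l))
      linarith [h2]
    have hBsq : α^2*l^2*B^2 ≤ (25/8)*α^4*l^2*Q^2 + (25/32)*α^4*l^4*(n:ℝ)^4*R^2 := by
      have h1 : B^2 ≤ ((5/4)*α*Q + (5/8)*α*l*(n:ℝ)^2*R)^2 :=
        pow_le_pow_left₀ hBnn hB 2
      have h2 : ((5/4)*α*Q + (5/8)*α*l*(n:ℝ)^2*R)^2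
          ≤ 2*((5/4)*α*Q)^2 + 2*((5/8)*α*l*(n:ℝ)^2*R)^2 := by
        nlinarith [sq_nonneg ((5/4)*α*Q - (5/8)*α*l*(n:ℝ)^2*R)]
      have h3 := mul_le_mul_of_nonneg_left (h1.trans h2)
        (by positivity : (0:ℝ) ≤ α^2*l^2)
      linarith [h3]
    have h5R : (5/4)*α^2*l^2*(n:ℝ)^2*R^2 ≤ (x/4)*R^2 := by
      linarith [mul_le_mul_of_nonneg_right hn2a2l2 (sq_nonneg R)]
    have h6R : (25/32)*α^4*l^4*(n:ℝ)^4*R^2 ≤ (x/160)*R^2 := by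
      have h1 : α^4*l^4*(n:ℝ)^4 = ((n:ℝ)^2*α^2*l^2)^2 := by ring
      have h2 : ((n:ℝ)^2*α^2*l^2)^2 ≤ (x/5)^2 := by
        apply pow_le_pow_left₀ (by positivity) hn2a2l2
      have h3 : (x/5)^2 ≤ (1/5)*(x/25) := by
        nlinarith [mul_nonneg hx0.le (sub_nonneg.mpr hx15)]
      linarith [mul_le_mul_of_nonneg_right (h2.trans h3) (sq_nonneg R)]
    have hexpand : (‖u‖ + α*l*B)^2 = ‖u‖^2 + 2*(α*l)*‖u‖*B + α^2*l^2*B^2 := by ring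
    calc ‖gdaStep ω α τ z n - zs‖ ^ 2 = ‖w n - zs‖^2 := by rw [hwdef]
      _ ≤ (‖u‖ + α*l*B)^2 := hwn2
      _ = ‖u‖^2 + 2*(α*l)*‖u‖*B + α^2*l^2*B^2 := hexpand
      _ ≤ ((1 - 2*x + x/5) * R^2) + ((x/2)*R^2 + (25/8)*(α^4*l^2/x)*Q^2 + (x/4)*R^2)
            + ((25/8)*α^4*l^2*Q^2 + (x/160)*R^2) := by
          linarith [hu2, hcross, young, h5R, hBsq, h6R]
      _ ≤ (1 - x) * R^2 + ((25:ℝ)/8) * (α^4*l^2/x + α^4*l^2) * Q^2 := by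
          linarith [mul_nonneg hx0.le (sq_nonneg R)]

  -- expectation of Q^2 over permutations
  have hQsum : ∑ τ : Equiv.Perm (Fin n), (∑ i : Fin n, ‖∑ j ∈ Jset n (i:ℕ), ω (τ j) zs‖)^2
      ≤ (n.factorial : ℝ) * ((n:ℝ)^3 * σ2 / 4) := by
    have hQP : ∀ τ : Equiv.Perm (Fin n),
        (∑ i : Fin n, ‖∑ j ∈ Jset n (i:ℕ), ω (τ j) zs‖)^2
          ≤ (n:ℝ) * ∑ i : Fin n, ‖∑ j ∈ Jset n (i:ℕ), ω (τ j) zs‖^2 := by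
      intro τ
      have h := sq_sum_le_card_mul_sum_sq (s := (univ : Finset (Fin n)))
        (f := fun i => ‖∑ j ∈ Jset n (i:ℕ), ω (τ j) zs‖)
      simpa using h
    rcases eq_or_lt_of_le hn with h1 | h2
    · -- n = 1
      have hn1 : n = 1 := h1.symm
      subst hn1
      have hz : ∀ τ : Equiv.Perm (Fin 1),
          (∑ i : Fin 1, ‖∑ j ∈ Jset 1 (i:ℕ), ω (τ j) zs‖) = 0 := by
        intro τ
        rw [Fin.sum_univ_one]
        norm_num [Jset_zero]
      calc ∑ τ : Equiv.Perm (Fin 1),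
            (∑ i : Fin 1, ‖∑ j ∈ Jset 1 (i:ℕ), ω (τ j) zs‖)^2
          = ∑ τ : Equiv.Perm (Fin 1), (0:ℝ) :=
            Finset.sum_congr rfl (fun τ _ => by rw [hz τ]; norm_num)
        _ = 0 := Finset.sum_const_zero
        _ ≤ (Nat.factorial 1 : ℝ) * ((1:ℝ)^3 * σ2 / 4) := by positivity
        _ = (Nat.factorial 1 : ℝ) * (((1:ℕ):ℝ)^3 * σ2 / 4) := by norm_num
    · -- n ≥ 2
      obtain ⟨m, rfl⟩ : ∃ m, n = m + 2 := ⟨n - 2, by omega⟩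
      have hv : ∑ a : Fin (m+2), ω a zs = 0 := by
        have h := hν zs
        rw [hzs] at h
        have h2 := h.symm
        rcases smul_eq_zero.mp h2 with h3 | h3
        · exact absurd h3 (inv_ne_zero (ne_of_gt hn0))
        · exact h3
      have hV : ∑ a : Fin (m+2), ‖ω a zs‖^2 = ((m+2:ℕ):ℝ) * σ2 := by
        rw [hσ2]
        field_simp
      have hfact : (((m+2).factorial : ℕ):ℝ)
          = (((m+2:ℕ)):ℝ) * ((m+1:ℕ):ℝ) * ((m.factorial:ℕ):ℝ) := by
        rw [Nat.factorial_succ, Nat.factorial_succ]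
        push_cast
        ring
      have hS : ∑ i : Fin (m+2), (((i:ℕ):ℝ) * (((m+2:ℕ):ℝ) - ((i:ℕ):ℝ)))
          ≤ (((m+2:ℕ):ℝ) - 1) * ((m+2:ℕ):ℝ)^2 / 4 := by
        rw [Fin.sum_univ_eq_sum_range (fun i => (i:ℝ) * (((m+2:ℕ):ℝ) - (i:ℝ))) (m+2)]
        exact sum_id_mul_rev_le (m+2) (by omega)
      calc ∑ τ : Equiv.Perm (Fin (m+2)),
            (∑ i : Fin (m+2), ‖∑ j ∈ Jset (m+2) (i:ℕ), ω (τ j) zs‖)^2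
          ≤ ∑ τ : Equiv.Perm (Fin (m+2)),
            (((m+2:ℕ)):ℝ) * ∑ i : Fin (m+2), ‖∑ j ∈ Jset (m+2) (i:ℕ), ω (τ j) zs‖^2 := by
            apply Finset.sum_le_sum (fun τ _ => ?_)
            have := hQP τ
            exact_mod_cast this
        _ = (((m+2:ℕ)):ℝ) * ∑ i : Fin (m+2), ∑ τ : Equiv.Perm (Fin (m+2)),
              ‖∑ j ∈ Jset (m+2) (i:ℕ), ω (τ j) zs‖^2 := by
            rw [← Finset.mul_sum, Finset.sum_comm]
        _ = (((m+2:ℕ)):ℝ) * ∑ i : Fin (m+2),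
              (m.factorial : ℝ) * (((i:ℕ):ℝ) * (((m:ℝ)+2) - ((i:ℕ):ℝ)))
                * ∑ a, ‖ω a zs‖^2 := by
            congr 1
            apply Finset.sum_congr rfl (fun i _ => ?_)
            have hcard : ((Jset (m+2) (i:ℕ)).card : ℝ) = ((i:ℕ):ℝ) := by
              rw [Jset_card (i:ℕ) (le_of_lt i.isLt)]
            have h := perm_subset_sum_sq (fun a => ω a zs) hv (Jset (m+2) (i:ℕ))
            rw [h, hcard]
        _ ≤ (((m+2).factorial : ℕ):ℝ) * (((m+2:ℕ):ℝ)^3 * σ2 / 4) := by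
            have e1 : ∑ i : Fin (m+2),
                (m.factorial : ℝ) * (((i:ℕ):ℝ) * (((m:ℝ)+2) - ((i:ℕ):ℝ)))
                  * ∑ a, ‖ω a zs‖^2
                = ((m.factorial : ℝ) * (((m+2:ℕ):ℝ) * σ2)) *
                    ∑ i : Fin (m+2), (((i:ℕ):ℝ) * (((m+2:ℕ):ℝ) - ((i:ℕ):ℝ))) := by
              rw [Finset.mul_sum]
              apply Finset.sum_congr rfl (fun i _ => ?_)
              rw [hV]
              push_cast
              ring
            rw [e1]
            have hc0 : (0:ℝ) ≤ ((m+2:ℕ):ℝ) * ((m.factorial : ℝ) * (((m+2:ℕ):ℝ) * σ2)) := by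
              positivity
            have h2 := mul_le_mul_of_nonneg_left hS hc0
            calc (((m+2:ℕ)):ℝ) * (((m.factorial : ℝ) * (((m+2:ℕ):ℝ) * σ2)) *
                    ∑ i : Fin (m+2), (((i:ℕ):ℝ) * (((m+2:ℕ):ℝ) - ((i:ℕ):ℝ))))
                = ((m+2:ℕ):ℝ) * ((m.factorial : ℝ) * (((m+2:ℕ):ℝ) * σ2)) *
                    ∑ i : Fin (m+2), (((i:ℕ):ℝ) * (((m+2:ℕ):ℝ) - ((i:ℕ):ℝ))) := by ring
              _ ≤ ((m+2:ℕ):ℝ) * ((m.factorial : ℝ) * (((m+2:ℕ):ℝ) * σ2)) *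
                    ((((m+2:ℕ):ℝ) - 1) * ((m+2:ℕ):ℝ)^2 / 4) := h2
              _ = (((m+2).factorial : ℕ):ℝ) * (((m+2:ℕ):ℝ)^3 * σ2 / 4) := by
                  rw [hfact]
                  push_cast
                  ring
  -- assemble
  set c : ℝ := ((25:ℝ)/8) * (α^4*l^2/x + α^4*l^2) with hcdef
  have hc0 : 0 ≤ c := by
    rw [hcdef]
    positivity
  have hexpx : (1 - x) ≤ Real.exp (-x) := by
    have := Real.add_one_le_exp (-x)
    linarith
  have hcU : c * ((n:ℝ)^3 * σ2 / 4) ≤ l^2 * σ2 * α^3 * (n:ℝ)^2 / μ := by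
    have e1 : c * ((n:ℝ)^3 * σ2 / 4) = ((25:ℝ)/32)*(1+x) * (α^3*l^2*(n:ℝ)^2*σ2/μ) := by
      rw [hcdef, hxdef]
      field_simp
      ring
    have e2 : ((25:ℝ)/32)*(1+x) ≤ 1 := by linarith
    calc c * ((n:ℝ)^3 * σ2 / 4) = ((25:ℝ)/32)*(1+x) * (α^3*l^2*(n:ℝ)^2*σ2/μ) := e1
      _ ≤ 1 * (α^3*l^2*(n:ℝ)^2*σ2/μ) := by
          apply mul_le_mul_of_nonneg_right e2 (by positivity)
      _ = l^2 * σ2 * α^3 * (n:ℝ)^2 / μ := by ring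
  calc ∑ τ : Equiv.Perm (Fin n), ‖gdaStep ω α τ z n - zs‖ ^ 2
      ≤ ∑ τ : Equiv.Perm (Fin n), ((1 - x) * R^2
          + c * (∑ i : Fin n, ‖∑ j ∈ Jset n (i:ℕ), ω (τ j) zs‖)^2) :=
        Finset.sum_le_sum (fun τ _ => key τ)
    _ = (n.factorial : ℝ) * ((1 - x) * R^2)
          + c * ∑ τ : Equiv.Perm (Fin n),
              (∑ i : Fin n, ‖∑ j ∈ Jset n (i:ℕ), ω (τ j) zs‖)^2 := by
        rw [Finset.sum_add_distrib, Finset.sum_const, ← Finset.mul_sum, Finset.card_univ,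
          Fintype.card_perm, Fintype.card_fin, nsmul_eq_mul]
    _ ≤ (n.factorial : ℝ) * ((1 - x) * R^2) + c * ((n.factorial : ℝ) * ((n:ℝ)^3 * σ2 / 4)) :=
        add_le_add (le_refl _) (mul_le_mul_of_nonneg_left hQsum hc0)
    _ ≤ (n.factorial : ℝ) *
        (Real.exp (-((n:ℝ) * α * μ)) * ‖z - zs‖ ^ 2 + l ^ 2 * σ2 * α ^ 3 * (n:ℝ) ^ 2 / μ) := by
        rw [← hxdef, ← hRdef]
        have h1 : (1 - x) * R^2 ≤ Real.exp (-x) * R^2 :=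
          mul_le_mul_of_nonneg_right hexpx (sq_nonneg R)
        have h2 : c * ((n.factorial : ℝ) * ((n:ℝ)^3 * σ2 / 4))
            = (n.factorial : ℝ) * (c * ((n:ℝ)^3 * σ2 / 4)) := by ring
        have hf0 : (0:ℝ) ≤ (n.factorial : ℝ) := by positivity
        have h3 := mul_le_mul_of_nonneg_left (add_le_add h1 hcU) hf0
        rw [h2]
        linarith [h3]



lemma gdaEpochs_congr {E : Type*} [NormedAddCommGroup E] [NormedSpace ℝ E] {n : ℕ}
    (ω : Fin n → E → E) (α : ℝ) (τs τs' : ℕ → Equiv.Perm (Fin n)) (z0 : E) (k : ℕ)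
    (h : ∀ j < k, τs j = τs' j) :
    gdaEpochs ω α τs z0 k = gdaEpochs ω α τs' z0 k := by
  induction k with
  | zero => rfl
  | succ k ih =>
    show gdaStep ω α (τs k) (gdaEpochs ω α τs z0 k) n
        = gdaStep ω α (τs' k) (gdaEpochs ω α τs' z0 k) n
    rw [h k (Nat.lt_succ_self k), ih (fun j hj => h j (Nat.lt_succ_of_lt hj))]

set_option maxHeartbeats 1000000 in
lemma epochs_bound {E : Type*} [NormedAddCommGroup E] [InnerProductSpace ℝ E]
    (n : ℕ) (hn : 1 ≤ n) (ω : Fin n → E → E) (l μ : ℝ) (hμ : 0 < μ) (hμl : μ ≤ l)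
    (hlip : ∀ (i : Fin n) (z₁ z₂ : E), ‖ω i z₁ - ω i z₂‖ ≤ l * ‖z₁ - z₂‖)
    (ν : E → E) (hν : ∀ z, ν z = (n : ℝ)⁻¹ • ∑ i, ω i z)
    (hmono : ∀ z₁ z₂, ⟪ν z₁ - ν z₂, z₁ - z₂⟫ ≥ μ * ‖z₁ - z₂‖ ^ 2)
    (zs : E) (hzs : ν zs = 0)
    (σ2 : ℝ) (hσ2 : σ2 = (n : ℝ)⁻¹ * ∑ i, ‖ω i zs‖ ^ 2)
    (α : ℝ) (hα0 : 0 < α) (hα5 : α * (n:ℝ) * l ^ 2 ≤ μ / 5) (z0 : E) (K : ℕ) :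
    ∑ τ : Fin K → Equiv.Perm (Fin n),
        ‖gdaEpochs ω α (fun k => if h : k < K then τ ⟨k, h⟩ else 1) z0 K - zs‖ ^ 2
      ≤ ((n.factorial : ℝ)^K) *
          (Real.exp (-((n:ℝ)*α*μ*(K:ℝ))) * ‖z0 - zs‖^2
            + (l^2*σ2*α^3*(n:ℝ)^2/μ) * (K:ℝ)) := by
  have hσ2nn : 0 ≤ σ2 := by rw [hσ2]; positivity
  have hl : (0:ℝ) < l := lt_of_lt_of_le hμ hμl
  have hU0 : (0:ℝ) ≤ l^2*σ2*α^3*(n:ℝ)^2/μ := by positivity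
  induction K with
  | zero =>
    simp only [pow_zero, Nat.cast_zero, mul_zero, neg_zero, Real.exp_zero, one_mul, add_zero]
    have : ∀ τ : Fin 0 → Equiv.Perm (Fin n),
        gdaEpochs ω α (fun k => if h : k < 0 then τ ⟨k, h⟩ else 1) z0 0 = z0 := fun _ => rfl
    rw [Finset.sum_congr rfl (fun τ _ => by rw [this τ])]
    rw [Finset.sum_const, Finset.card_univ]
    simp
  | succ K ih =>
    have hsplit : ∑ τ : Fin (K+1) → Equiv.Perm (Fin n),
        ‖gdaEpochs ω α (fun k => if h : k < K+1 then τ ⟨k, h⟩ else 1) z0 (K+1) - zs‖ ^ 2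
      = ∑ g : Fin K → Equiv.Perm (Fin n), ∑ σ : Equiv.Perm (Fin n),
          ‖gdaStep ω α σ
            (gdaEpochs ω α (fun k => if h : k < K then g ⟨k, h⟩ else 1) z0 K) n - zs‖^2 := by
      rw [← Equiv.sum_comp (Fin.snocEquiv (fun _ => Equiv.Perm (Fin n)))
        (fun τ => ‖gdaEpochs ω α (fun k => if h : k < K+1 then τ ⟨k, h⟩ else 1) z0 (K+1) - zs‖ ^ 2)]
      rw [Fintype.sum_prod_type, Finset.sum_comm]
      apply Finset.sum_congr rfl
      intro g _
      apply Finset.sum_congr rfl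
      intro σ _
      have hval : (Fin.snocEquiv (fun _ => Equiv.Perm (Fin n)) (σ, g))
          = Fin.snoc (α := fun _ => Equiv.Perm (Fin n)) g σ := rfl
      congr 1
      rw [hval]
      have hstep : gdaEpochs ω α
          (fun k => if h : k < K+1 then Fin.snoc (α := fun _ => Equiv.Perm (Fin n)) g σ ⟨k, h⟩ else 1)
          z0 (K+1)
          = gdaStep ω α
            ((fun k => if h : k < K+1 then Fin.snoc (α := fun _ => Equiv.Perm (Fin n)) g σ ⟨k, h⟩ else 1) K)
            (gdaEpochs ω α
              (fun k => if h : k < K+1 then Fin.snoc (α := fun _ => Equiv.Perm (Fin n)) g σ ⟨k, h⟩ else 1)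
              z0 K) n := rfl
      rw [hstep]
      have hlast : (fun k => if h : k < K+1 then Fin.snoc (α := fun _ => Equiv.Perm (Fin n)) g σ ⟨k, h⟩ else 1) K = σ := by
        simp only [dif_pos (Nat.lt_succ_self K)]
        have h1 : (⟨K, Nat.lt_succ_self K⟩ : Fin (K+1)) = Fin.last K := rfl
        rw [h1, Fin.snoc_last]
      have hinit : gdaEpochs ω α
          (fun k => if h : k < K+1 then Fin.snoc (α := fun _ => Equiv.Perm (Fin n)) g σ ⟨k, h⟩ else 1)
          z0 K
          = gdaEpochs ω α (fun k => if h : k < K then g ⟨k, h⟩ else 1) z0 K := by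
        apply gdaEpochs_congr
        intro j hj
        rw [dif_pos (Nat.lt_succ_of_lt hj), dif_pos hj]
        have h1 : (⟨j, Nat.lt_succ_of_lt hj⟩ : Fin (K+1)) = Fin.castSucc ⟨j, hj⟩ := rfl
        rw [h1, Fin.snoc_castSucc]
      rw [hlast, hinit]
    rw [hsplit]
    set Z : (Fin K → Equiv.Perm (Fin n)) → E :=
      fun g => gdaEpochs ω α (fun k => if h : k < K then g ⟨k, h⟩ else 1) z0 K with hZdef
    have hepoch : ∀ g : Fin K → Equiv.Perm (Fin n),
        ∑ σ : Equiv.Perm (Fin n), ‖gdaStep ω α σ (Z g) n - zs‖^2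
          ≤ (n.factorial : ℝ) *
            (Real.exp (-((n:ℝ)*α*μ)) * ‖Z g - zs‖^2 + l^2*σ2*α^3*(n:ℝ)^2/μ) :=
      fun g => epoch_bound n hn ω l μ hμ hμl hlip ν hν hmono zs hzs σ2 hσ2 α hα0 hα5 (Z g)
    have hf0 : (0:ℝ) < (n.factorial : ℝ) := by
      exact_mod_cast Nat.factorial_pos n
    have hexp1 : Real.exp (-((n:ℝ)*α*μ)) ≤ 1 := by
      rw [← Real.exp_zero]
      apply Real.exp_le_exp.mpr
      have : (0:ℝ) < (n:ℝ)*α*μ := by positivity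
      linarith
    calc ∑ g : Fin K → Equiv.Perm (Fin n), ∑ σ : Equiv.Perm (Fin n),
          ‖gdaStep ω α σ (Z g) n - zs‖^2
        ≤ ∑ g : Fin K → Equiv.Perm (Fin n), (n.factorial : ℝ) *
            (Real.exp (-((n:ℝ)*α*μ)) * ‖Z g - zs‖^2 + l^2*σ2*α^3*(n:ℝ)^2/μ) :=
          Finset.sum_le_sum (fun g _ => hepoch g)
      _ = (n.factorial : ℝ) * Real.exp (-((n:ℝ)*α*μ)) *
            (∑ g : Fin K → Equiv.Perm (Fin n), ‖Z g - zs‖^2)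
          + (n.factorial : ℝ) * ((n.factorial : ℝ)^K) * (l^2*σ2*α^3*(n:ℝ)^2/μ) := by
          rw [Finset.sum_congr rfl (fun g _ => mul_add ((n.factorial : ℝ)) _ _)]
          rw [Finset.sum_add_distrib, Finset.sum_const, Finset.card_univ]
          have hcard : Fintype.card (Fin K → Equiv.Perm (Fin n)) = n.factorial ^ K := by
            rw [Fintype.card_fun, Fintype.card_perm, Fintype.card_fin, Fintype.card_fin]
          rw [hcard, nsmul_eq_mul]
          rw [Finset.sum_congr rfl
            (fun g _ => (mul_assoc ((n.factorial : ℝ)) _ _).symm), ← Finset.mul_sum]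
          push_cast
          ring
      _ ≤ (n.factorial : ℝ) * Real.exp (-((n:ℝ)*α*μ)) *
            (((n.factorial : ℝ)^K) *
              (Real.exp (-((n:ℝ)*α*μ*(K:ℝ))) * ‖z0 - zs‖^2
                + (l^2*σ2*α^3*(n:ℝ)^2/μ) * (K:ℝ)))
          + (n.factorial : ℝ) * ((n.factorial : ℝ)^K) * (l^2*σ2*α^3*(n:ℝ)^2/μ) := by
          apply add_le_add _ (le_refl _)
          apply mul_le_mul_of_nonneg_left ih
          positivity
      _ ≤ ((n.factorial : ℝ)^(K+1)) *
          (Real.exp (-((n:ℝ)*α*μ*((K+1:ℕ):ℝ))) * ‖z0 - zs‖^2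
            + (l^2*σ2*α^3*(n:ℝ)^2/μ) * ((K+1:ℕ):ℝ)) := by
          have hee : Real.exp (-((n:ℝ)*α*μ)) * Real.exp (-((n:ℝ)*α*μ*(K:ℝ)))
              = Real.exp (-((n:ℝ)*α*μ*((K+1:ℕ):ℝ))) := by
            rw [← Real.exp_add]
            congr 1
            push_cast
            ring
          have hterm : (n.factorial : ℝ) * Real.exp (-((n:ℝ)*α*μ)) * (((n.factorial : ℝ)^K) *
              ((l^2*σ2*α^3*(n:ℝ)^2/μ) * (K:ℝ)))
              ≤ (n.factorial : ℝ) * ((n.factorial : ℝ)^K) * ((l^2*σ2*α^3*(n:ℝ)^2/μ) * (K:ℝ)) := by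
            have h1 : (0:ℝ) ≤ ((n.factorial : ℝ)^K) * ((l^2*σ2*α^3*(n:ℝ)^2/μ) * (K:ℝ)) := by
              have : (0:ℝ) ≤ l^2*σ2*α^3*(n:ℝ)^2/μ := hU0
              positivity
            calc (n.factorial : ℝ) * Real.exp (-((n:ℝ)*α*μ)) * (((n.factorial : ℝ)^K) *
                  ((l^2*σ2*α^3*(n:ℝ)^2/μ) * (K:ℝ)))
                ≤ (n.factorial : ℝ) * 1 * (((n.factorial : ℝ)^K) *
                  ((l^2*σ2*α^3*(n:ℝ)^2/μ) * (K:ℝ))) := by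
                  apply mul_le_mul_of_nonneg_right _ h1
                  apply mul_le_mul_of_nonneg_left hexp1 hf0.le
              _ = (n.factorial : ℝ) * ((n.factorial : ℝ)^K) * ((l^2*σ2*α^3*(n:ℝ)^2/μ) * (K:ℝ)) := by
                  ring
          have hexpand : (n.factorial : ℝ) * Real.exp (-((n:ℝ)*α*μ)) *
              (((n.factorial : ℝ)^K) *
                (Real.exp (-((n:ℝ)*α*μ*(K:ℝ))) * ‖z0 - zs‖^2
                  + (l^2*σ2*α^3*(n:ℝ)^2/μ) * (K:ℝ)))
              = (n.factorial : ℝ) * ((n.factorial : ℝ)^K) *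
                  (Real.exp (-((n:ℝ)*α*μ*((K+1:ℕ):ℝ))) * ‖z0 - zs‖^2)
                + (n.factorial : ℝ) * Real.exp (-((n:ℝ)*α*μ)) * (((n.factorial : ℝ)^K) *
                  ((l^2*σ2*α^3*(n:ℝ)^2/μ) * (K:ℝ))) := by
            rw [← hee]
            ring
          rw [hexpand]
          have hgoal : ((n.factorial : ℝ)^(K+1)) *
              (Real.exp (-((n:ℝ)*α*μ*((K+1:ℕ):ℝ))) * ‖z0 - zs‖^2
                + (l^2*σ2*α^3*(n:ℝ)^2/μ) * ((K+1:ℕ):ℝ))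
              = (n.factorial : ℝ) * ((n.factorial : ℝ)^K) *
                  (Real.exp (-((n:ℝ)*α*μ*((K+1:ℕ):ℝ))) * ‖z0 - zs‖^2)
                + (n.factorial : ℝ) * ((n.factorial : ℝ)^K) * ((l^2*σ2*α^3*(n:ℝ)^2/μ) * (K:ℝ))
                + (n.factorial : ℝ) * ((n.factorial : ℝ)^K) * (l^2*σ2*α^3*(n:ℝ)^2/μ) := by
            push_cast
            ring
          rw [hgoal]
          linarith [hterm]

/-- GDA with Random Reshuffling: averaging over all `(n!)^K` tuples of permutations,
the final epoch iterate satisfies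
`E‖z^{K+1}₀ − z*‖² ≤ 2e^{−nαμK}‖z₀ − z*‖² + l²σ*²α³n²K/μ`. -/
theorem stmt_10
    {E : Type*} [NormedAddCommGroup E] [InnerProductSpace ℝ E] [FiniteDimensional ℝ E]
    (n : ℕ) (hn : 1 ≤ n) (ω : Fin n → E → E) (l μ : ℝ) (hμ : 0 < μ) (hμl : μ ≤ l)
    (hlip : ∀ (i : Fin n) (z₁ z₂ : E), ‖ω i z₁ - ω i z₂‖ ≤ l * ‖z₁ - z₂‖)
    (ν : E → E) (hν : ∀ z, ν z = (n : ℝ)⁻¹ • ∑ i, ω i z)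
    (hmono : ∀ z₁ z₂, ⟪ν z₁ - ν z₂, z₁ - z₂⟫ ≥ μ * ‖z₁ - z₂‖ ^ 2)
    (zs : E) (hzs : ν zs = 0)
    (σ2 : ℝ) (hσ2 : σ2 = (n : ℝ)⁻¹ * ∑ i, ‖ω i zs‖ ^ 2)
    (z0 : E) (K : ℕ) (hK : 1 ≤ K) (α : ℝ) (hα0 : 0 < α) (hα : α ≤ μ / (5 * n * l ^ 2)) :
    ((n.factorial : ℝ) ^ K)⁻¹ *
        ∑ τ : Fin K → Equiv.Perm (Fin n),
          ‖gdaEpochs ω α (fun k => if h : k < K then τ ⟨k, h⟩ else 1) z0 K - zs‖ ^ 2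
      ≤ 2 * Real.exp (-((n : ℝ) * α * μ * K)) * ‖z0 - zs‖ ^ 2 +
          l ^ 2 * σ2 * α ^ 3 * (n : ℝ) ^ 2 * K / μ := by
  have hl : (0:ℝ) < l := lt_of_lt_of_le hμ hμl
  have hn0 : (0:ℝ) < (n:ℝ) := by exact_mod_cast hn
  have hσ2nn : 0 ≤ σ2 := by rw [hσ2]; positivity
  have hα5 : α * (n:ℝ) * l ^ 2 ≤ μ / 5 := by
    have hd : (0:ℝ) < 5 * (n:ℝ) * l ^ 2 := by positivity
    have h1 := (le_div_iff₀ hd).mp hα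
    linarith
  have hb := epochs_bound n hn ω l μ hμ hμl hlip ν hν hmono zs hzs σ2 hσ2 α hα0 hα5 z0 K
  have hfpow : (0:ℝ) < (n.factorial:ℝ)^K := by positivity
  calc ((n.factorial : ℝ) ^ K)⁻¹ *
        ∑ τ : Fin K → Equiv.Perm (Fin n),
          ‖gdaEpochs ω α (fun k => if h : k < K then τ ⟨k, h⟩ else 1) z0 K - zs‖ ^ 2
      ≤ ((n.factorial : ℝ) ^ K)⁻¹ * (((n.factorial : ℝ)^K) *
          (Real.exp (-((n:ℝ)*α*μ*(K:ℝ))) * ‖z0 - zs‖^2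
            + (l^2*σ2*α^3*(n:ℝ)^2/μ) * (K:ℝ))) := by
        apply mul_le_mul_of_nonneg_left hb (inv_nonneg.mpr hfpow.le)
    _ = Real.exp (-((n:ℝ)*α*μ*(K:ℝ))) * ‖z0 - zs‖^2 + (l^2*σ2*α^3*(n:ℝ)^2/μ) * (K:ℝ) := by
        rw [← mul_assoc, inv_mul_cancel₀ (ne_of_gt hfpow), one_mul]
    _ ≤ 2 * Real.exp (-((n : ℝ) * α * μ * K)) * ‖z0 - zs‖ ^ 2 +
          l ^ 2 * σ2 * α ^ 3 * (n : ℝ) ^ 2 * K / μ := by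
        have h1 : (0:ℝ) ≤ Real.exp (-((n:ℝ)*α*μ*(K:ℝ))) * ‖z0 - zs‖^2 := by positivity
        have h2 : (l^2*σ2*α^3*(n:ℝ)^2/μ) * (K:ℝ)
            = l ^ 2 * σ2 * α ^ 3 * (n : ℝ) ^ 2 * K / μ := by ring
        linarith
end

section
/- Let E be a finite-dimensional real inner product space, n ≥ 1, and ω₁, …, ωₙ : E → E l-Lipschitz maps whose average ν = (1/n)·Σᵢ ωᵢ is μ-strongly monotone with 0 < μ ≤ l; let z* be the unique root of ν and σ*² = (1/n)·Σᵢ ‖ωᵢ(z*)‖². Fix z₀ ∈ E, K ≥ 1, and 0 < α ≤ μ/(5nl²). Then for EVERY sequence of permutations τ₁, …, τ_K of {1,…,n} (in particular for the identity permutations, i.e., the incremental gradient method), the GDA-without-replacement output after K epochs satisfies ‖z^{K+1}₀ − z*‖² ≤ 2·e^{−nαμK}·‖z₀ − z*‖² + 3l²σ*²α³n³K/μ. -/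
set_option maxHeartbeats 1000000


open scoped RealInnerProductSpace

lemma pow_one_add_le (x : ℝ) (hx : 0 ≤ x) (n : ℕ) (hnx : (n:ℝ) * x ≤ 1/5) :
    ∀ m ≤ n, (1 + x) ^ m ≤ 1 + m * x + (5/9) * (m:ℝ)^2 * x^2 := by
  intro m hm
  induction m with
  | zero => norm_num
  | succ k ih =>
    have hk : k ≤ n := Nat.le_of_succ_le hm
    have ihk := ih hk
    have hkx : (k:ℝ) * x ≤ 1/5 := by
      have : (k:ℝ) ≤ n := Nat.cast_le.mpr hk
      nlinarith
    have h1 : (0:ℝ) ≤ 1 + x := by linarith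
    have : (1+x)^(k+1) = (1+x)^k * (1+x) := pow_succ _ _
    rw [this]
    have hb : (1+x)^k * (1+x) ≤ (1 + k*x + (5/9)*(k:ℝ)^2*x^2) * (1+x) := by
      apply mul_le_mul_of_nonneg_right ihk h1
    refine hb.trans ?_
    push_cast
    have hx2 : (k:ℝ)*x*x^2 ≤ (1/5)*x^2 := by nlinarith [sq_nonneg x]
    nlinarith [sq_nonneg x, Nat.cast_nonneg (α := ℝ) k]

lemma geomP_le (x : ℝ) (hx : 0 < x) (n : ℕ) (hnx : (n:ℝ) * x ≤ 1/5) :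
    ∑ m ∈ Finset.range n, (1+x)^m ≤ (n:ℝ) + (5/9) * (n:ℝ)^2 * x := by
  have hP : (∑ m ∈ Finset.range n, (1+x)^m) * x = (1+x)^n - 1 := by
    have := geom_sum_mul (1+x) n
    simpa using this
  have hpow : (1+x)^n ≤ 1 + n*x + (5/9)*(n:ℝ)^2*x^2 :=
    pow_one_add_le x hx.le n hnx n le_rfl
  have : (∑ m ∈ Finset.range n, (1+x)^m) * x ≤ ((n:ℝ) + (5/9)*(n:ℝ)^2*x) * x := by
    rw [hP]; nlinarith
  exact le_of_mul_le_mul_right this hx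

lemma geomP_sub_le (x : ℝ) (hx : 0 < x) (n : ℕ) (hnx : (n:ℝ) * x ≤ 1/5) :
    ∑ m ∈ Finset.range n, ((1+x)^m - 1) ≤ (5/9) * (n:ℝ)^2 * x := by
  have h := geomP_le x hx n hnx
  rw [Finset.sum_sub_distrib] at *
  simp at *
  linarith

lemma double_sum_le (x : ℝ) (hx : 0 ≤ x) (n : ℕ) (G : ℕ → ℝ) (hG : ∀ j, 0 ≤ G j) :
    ∑ i ∈ Finset.range n, ∑ j ∈ Finset.range i, (1+x)^(i-1-j) * G j
      ≤ (∑ m ∈ Finset.range n, (1+x)^m) * ∑ j ∈ Finset.range n, G j := by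
  have h1x : (0:ℝ) ≤ 1 + x := by linarith
  have hinner : ∀ i ∈ Finset.range n, ∑ j ∈ Finset.range i, (1+x)^(i-1-j) * G j
      = ∑ j ∈ Finset.range n, if j < i then (1+x)^(i-1-j) * G j else 0 := by
    intro i hi
    rw [Finset.sum_ite, Finset.sum_const_zero, add_zero]
    apply Finset.sum_congr
    · ext j; simp only [Finset.mem_filter, Finset.mem_range]
      constructor
      · intro hj; exact ⟨lt_trans hj (Finset.mem_range.mp hi), hj⟩
      · intro hj; exact hj.2
    · intros; rfl
  rw [Finset.sum_congr rfl hinner, Finset.sum_comm]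
  have hjb : ∀ j ∈ Finset.range n,
      ∑ i ∈ Finset.range n, (if j < i then (1+x)^(i-1-j) * G j else 0)
        ≤ (∑ m ∈ Finset.range n, (1+x)^m) * G j := by
    intro j hj
    have h1 : ∑ i ∈ Finset.range n, (if j < i then (1+x)^(i-1-j) * G j else 0)
        = (∑ i ∈ Finset.Ico (j+1) n, (1+x)^(i-1-j)) * G j := by
      rw [Finset.sum_ite, Finset.sum_const_zero, add_zero, Finset.sum_mul]
      apply Finset.sum_congr
      · ext i; simp only [Finset.mem_filter, Finset.mem_range, Finset.mem_Ico]; omega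
      · intros; rfl
    rw [h1]
    apply mul_le_mul_of_nonneg_right _ (hG j)
    rw [Finset.sum_Ico_eq_sum_range]
    have : ∀ k ∈ Finset.range (n - (j+1)), (1+x)^(j+1+k-1-j) = (1+x)^k := by
      intro k _; congr 1; omega
    rw [Finset.sum_congr rfl this]
    apply Finset.sum_le_sum_of_subset_of_nonneg
    · exact Finset.range_subset_range.mpr (by omega)
    · intro m _ _; positivity
  calc ∑ j ∈ Finset.range n, ∑ i ∈ Finset.range n, (if j < i then (1+x)^(i-1-j) * G j else 0)
      ≤ ∑ j ∈ Finset.range n, (∑ m ∈ Finset.range n, (1+x)^m) * G j :=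
        Finset.sum_le_sum hjb
    _ = (∑ m ∈ Finset.range n, (1+x)^m) * ∑ j ∈ Finset.range n, G j := by
        rw [Finset.mul_sum]

lemma combine_abs (q A B r σ U e D1 D2 α : ℝ)
    (hq0 : 0 < q) (hr : 0 ≤ r) (hσ : 0 ≤ σ) (hU : 0 ≤ U) (he : 0 ≤ e) (hα : 0 ≤ α)
    (hA : 0 ≤ A) (hB : 0 ≤ B) (hD1 : 0 ≤ D1) (hD2 : 0 ≤ D2)
    (hUr : U ≤ r) (hU2 : U^2 ≤ (1 - 9/5*q)*r^2) (hE : e ≤ A*r + B*σ)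
    (h1 : 2*α*A ≤ (2/9)*q) (h2 : 2*(α*B)^2 ≤ q*D1) (h3 : 2*α^2*A^2 ≤ (2/405)*q)
    (h4 : 2*α^2*B^2 ≤ D2) :
    U^2 + 2*α*U*e + α^2*e^2 ≤ (1 - q)*r^2 + D1*σ^2 + D2*σ^2 := by
  have hEb0 : 0 ≤ A*r + B*σ := by positivity
  have s1 : 2*α*U*e ≤ 2*α*A*r^2 + 2*α*B*(r*σ) := by
    have h2' : U*e ≤ r*(A*r+B*σ) := mul_le_mul hUr hE he hr
    have h3' := mul_le_mul_of_nonneg_left h2' (by linarith : (0:ℝ) ≤ 2*α)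
    have : 2*α*(r*(A*r+B*σ)) = 2*α*A*r^2 + 2*α*B*(r*σ) := by ring
    linarith
  have s2 : α^2*e^2 ≤ 2*α^2*A^2*r^2 + 2*α^2*B^2*σ^2 := by
    have p1 : e^2 ≤ (A*r+B*σ)^2 := by
      have := mul_le_mul hE hE he hEb0
      linarith [this, (by ring : e*e = e^2),
        (by ring : (A*r+B*σ)*(A*r+B*σ) = (A*r+B*σ)^2)]
    have p2 : (A*r+B*σ)^2 ≤ 2*A^2*r^2 + 2*B^2*σ^2 := by
      have := sq_nonneg (A*r - B*σ); nlinarith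
    have p3 := mul_le_mul_of_nonneg_left (p1.trans p2) (sq_nonneg α)
    linarith [p3, (by ring : α^2*(2*A^2*r^2 + 2*B^2*σ^2) = 2*α^2*A^2*r^2 + 2*α^2*B^2*σ^2)]
  have t1 : 2*α*A*r^2 ≤ (2/9)*q*r^2 := by
    have := mul_le_mul_of_nonneg_right h1 (sq_nonneg r); linarith
  have hcross : 2*α*B*(r*σ) ≤ (1/2)*q*r^2 + D1*σ^2 := by
    have e1 := mul_le_mul_of_nonneg_right h2 (sq_nonneg σ)
    have e2 := sq_nonneg (q*r - 2*α*B*σ)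
    have hkey : q*(2*α*B*(r*σ)) ≤ q*((1/2)*q*r^2 + D1*σ^2) := by nlinarith
    exact le_of_mul_le_mul_left hkey hq0
  have u1 : 2*α^2*A^2*r^2 ≤ (2/405)*q*r^2 := by
    have := mul_le_mul_of_nonneg_right h3 (sq_nonneg r); linarith
  have u2 : 2*α^2*B^2*σ^2 ≤ D2*σ^2 := by
    have := mul_le_mul_of_nonneg_right h4 (sq_nonneg σ); linarith
  have coef : (1 - 9/5*q)*r^2 + (2/9)*q*r^2 + (1/2)*q*r^2 + (2/405)*q*r^2 ≤ (1-q)*r^2 := by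
    have := mul_nonneg hq0.le (sq_nonneg r); nlinarith
  linarith [s1, s2, t1, hcross, u1, u2, coef, hU2]

lemma gda_sum {E : Type*} [NormedAddCommGroup E] [NormedSpace ℝ E] {n : ℕ}
    (ω : Fin n → E → E) (α : ℝ) (τ : Equiv.Perm (Fin n)) (z : E) :
    ∀ i, i ≤ n → gdaStep ω α τ z i
      = z - α • ∑ j ∈ Finset.range i,
          (if h : j < n then ω (τ ⟨j,h⟩) (gdaStep ω α τ z j) else 0) := by
  intro i
  induction i with
  | zero => intro _; rw [gdaStep]; simp
  | succ k ih =>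
    intro hk
    have hkn : k < n := hk
    rw [gdaStep]
    simp only [hkn, dif_pos]
    rw [ih hkn.le, Finset.sum_range_succ, dif_pos hkn, smul_add]
    rw [ih hkn.le]
    abel

lemma epoch {E : Type*} [NormedAddCommGroup E] [InnerProductSpace ℝ E]
    (n : ℕ) (hn : 1 ≤ n) (ω : Fin n → E → E) (l μ : ℝ) (hμ : 0 < μ) (hμl : μ ≤ l)
    (hlip : ∀ (i : Fin n) (z₁ z₂ : E), ‖ω i z₁ - ω i z₂‖ ≤ l * ‖z₁ - z₂‖)
    (ν : E → E) (hν : ∀ z, ν z = (n : ℝ)⁻¹ • ∑ i, ω i z)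
    (hmono : ∀ z₁ z₂, ⟪ν z₁ - ν z₂, z₁ - z₂⟫ ≥ μ * ‖z₁ - z₂‖ ^ 2)
    (zs : E) (hzs : ν zs = 0)
    (σ2 : ℝ) (hσ2 : σ2 = (n : ℝ)⁻¹ * ∑ i, ‖ω i zs‖ ^ 2)
    (α : ℝ) (hα0 : 0 < α) (hα : α ≤ μ / (5 * n * l ^ 2))
    (τ : Equiv.Perm (Fin n)) (z : E) :
    ‖gdaStep ω α τ z n - zs‖ ^ 2
      ≤ (1 - (n:ℝ)*α*μ) * ‖z - zs‖ ^ 2 + 3*l^2*σ2*α^3*(n:ℝ)^3/μ := by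
  have hl : 0 < l := hμ.trans_le hμl
  have hn0 : (0:ℝ) < n := by exact_mod_cast hn
  have hn1 : (1:ℝ) ≤ n := by exact_mod_cast hn
  have h5 : α * n * l^2 ≤ μ/5 := by
    rw [le_div_iff₀ (by positivity)] at hα
    nlinarith
  have hnx : (n:ℝ) * (α*l) ≤ 1/5 := by
    have h' : (n:ℝ)*(α*l)*l ≤ (1/5)*l := by nlinarith
    exact le_of_mul_le_mul_right (by linarith) hl
  set x := α*l with hxdef
  have hx0 : 0 < x := by positivity
  set q := (n:ℝ)*α*μ with hqdef
  have hq0 : 0 < q := by positivity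
  have hq5 : q ≤ 1/5 := by
    have h1 : q*l^2 ≤ (1/5)*l^2 := by nlinarith
    exact le_of_mul_le_mul_right h1 (by positivity)
  set r := ‖z - zs‖ with hrdef
  have hr0 : 0 ≤ r := norm_nonneg _
  set w : ℕ → E := gdaStep ω α τ z with hwdef
  have hwstep : ∀ (i : ℕ) (h : i < n), w (i+1) = w i - α • ω (τ ⟨i,h⟩) (w i) := by
    intro i h
    show gdaStep ω α τ z (i+1) = _
    rw [gdaStep]
    simp [h]
    rfl
  have hw0 : w 0 = z := by show gdaStep ω α τ z 0 = z; rw [gdaStep]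
  have hwsum : ∀ i, i ≤ n → w i = z - α • ∑ j ∈ Finset.range i,
      (if h : j < n then ω (τ ⟨j,h⟩) (w j) else 0) := fun i hi => gda_sum ω α τ z i hi
  clear_value w
  set a : ℕ → ℝ := fun i => ‖w i - z‖ with hadef
  have ha0 : ∀ i, 0 ≤ a i := fun i => norm_nonneg _
  set G : ℕ → ℝ := fun j => if h : j < n then ‖ω (τ ⟨j,h⟩) zs‖ else 0 with hGdef
  have hG0 : ∀ j, 0 ≤ G j := by
    intro j; dsimp only [G]; split
    · exact norm_nonneg _
    · exact le_rfl
  -- per-step gradient norm bound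
  have hgrad : ∀ (i : ℕ) (h : i < n), ‖ω (τ ⟨i,h⟩) (w i)‖ ≤ l*(a i + r) + G i := by
    intro i h
    have t := hlip (τ ⟨i,h⟩) (w i) zs
    have tri : ‖ω (τ ⟨i,h⟩) (w i)‖
        ≤ ‖ω (τ ⟨i,h⟩) (w i) - ω (τ ⟨i,h⟩) zs‖ + ‖ω (τ ⟨i,h⟩) zs‖ := by
      have := norm_add_le (ω (τ ⟨i,h⟩) (w i) - ω (τ ⟨i,h⟩) zs) (ω (τ ⟨i,h⟩) zs)
      simpa using this
    have tw : ‖w i - zs‖ ≤ a i + r := by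
      have := norm_add_le (w i - z) (z - zs)
      simpa [sub_add_sub_cancel] using this
    have hGi : G i = ‖ω (τ ⟨i,h⟩) zs‖ := dif_pos h
    have := mul_le_mul_of_nonneg_left tw hl.le
    rw [hGi]
    linarith
  -- one-step recursion for a
  have hastep : ∀ (i : ℕ), i < n → a (i+1) ≤ (1+x)*a i + x*r + α*G i := by
    intro i h
    have h1 : w (i+1) - z = (w i - z) - α • ω (τ ⟨i,h⟩) (w i) := by
      rw [hwstep i h]; abel
    have h2 : a (i+1) ≤ a i + α * ‖ω (τ ⟨i,h⟩) (w i)‖ := by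
      calc a (i+1) = ‖(w i - z) - α • ω (τ ⟨i,h⟩) (w i)‖ := by rw [← h1]
        _ ≤ ‖w i - z‖ + ‖α • ω (τ ⟨i,h⟩) (w i)‖ := norm_sub_le _ _
        _ = a i + α * ‖ω (τ ⟨i,h⟩) (w i)‖ := by
            rw [norm_smul, Real.norm_of_nonneg hα0.le]
    have h3 := mul_le_mul_of_nonneg_left (hgrad i h) hα0.le
    have : α*(l*(a i + r) + G i) = α*l*a i + α*l*r + α*G i := by ring
    rw [hxdef]
    nlinarith [h2, h3]
  -- closed-form bound for a
  have habound : ∀ i, i ≤ n →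
      a i ≤ r*((1+x)^i - 1) + α * ∑ j ∈ Finset.range i, (1+x)^(i-1-j) * G j := by
    intro i
    induction i with
    | zero => intro _; simp [a, hw0]
    | succ k ih =>
      intro hk
      have hkn : k < n := hk
      have ihk := ih hkn.le
      have step := hastep k hkn
      have h1x : (0:ℝ) ≤ 1+x := by linarith
      set S := ∑ j ∈ Finset.range k, (1+x)^(k-1-j)*G j with hSdef
      have key : a (k+1) ≤ r*((1+x)^(k+1) - 1) + α*((1+x)*S + G k) := by
        have hmul := mul_le_mul_of_nonneg_left ihk h1x
        have expand : (1+x)*(r*((1+x)^k-1) + α*S) + (x*r + α*G k)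
            = r*((1+x)^(k+1)-1) + α*((1+x)*S + G k) := by ring
        linarith [step, hmul, expand]
      have hsum : (1+x)*∑ j ∈ Finset.range k, (1+x)^(k-1-j)*G j + G k
          = ∑ j ∈ Finset.range (k+1), (1+x)^(k-j)*G j := by
        rw [Finset.sum_range_succ, Nat.sub_self, pow_zero, one_mul, Finset.mul_sum]
        congr 1
        apply Finset.sum_congr rfl
        intro j hj
        have hjk : j < k := Finset.mem_range.mp hj
        rw [← mul_assoc, ← pow_succ']
        congr 2
        omega
      rw [hsum] at key
      have : ∀ j ∈ Finset.range (k+1), (1+x)^(k-j)*G j = (1+x)^(k+1-1-j)*G j := by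
        intro j _; congr 2
      rw [Finset.sum_congr rfl this] at key
      exact key
  -- sum of deviations
  have hsuma : ∑ i ∈ Finset.range n, a i
      ≤ r*((5/9)*(n:ℝ)^2*x)
        + α * ((∑ m ∈ Finset.range n, (1+x)^m) * ∑ j ∈ Finset.range n, G j) := by
    have h1 : ∑ i ∈ Finset.range n, a i
        ≤ ∑ i ∈ Finset.range n, (r*((1+x)^i - 1)
            + α * ∑ j ∈ Finset.range i, (1+x)^(i-1-j) * G j) := by
      apply Finset.sum_le_sum
      intro i hi
      exact habound i (Finset.mem_range.mp hi).le
    rw [Finset.sum_add_distrib] at h1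
    have h2 : ∑ i ∈ Finset.range n, r*((1+x)^i - 1) ≤ r*((5/9)*(n:ℝ)^2*x) := by
      rw [← Finset.mul_sum]
      exact mul_le_mul_of_nonneg_left (geomP_sub_le x hx0 n hnx) hr0
    have h3 : ∑ i ∈ Finset.range n, α * ∑ j ∈ Finset.range i, (1+x)^(i-1-j) * G j
        ≤ α * ((∑ m ∈ Finset.range n, (1+x)^m) * ∑ j ∈ Finset.range n, G j) := by
      rw [← Finset.mul_sum]
      exact mul_le_mul_of_nonneg_left (double_sum_le x hx0.le n G hG0) hα0.le
    linarith
  -- σ facts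
  have hσ2nn : 0 ≤ σ2 := by
    rw [hσ2]
    have : (0:ℝ) ≤ ∑ i, ‖ω i zs‖^2 := Finset.sum_nonneg fun i _ => sq_nonneg _
    positivity
  set σ := Real.sqrt σ2 with hσdef
  have hσnn : 0 ≤ σ := Real.sqrt_nonneg _
  have hσsq : σ^2 = σ2 := Real.sq_sqrt hσ2nn
  -- sum of G bounded by n σ
  have hGsum : ∑ j ∈ Finset.range n, G j ≤ (n:ℝ)*σ := by
    have hGeq : ∑ j ∈ Finset.range n, G j = ∑ i : Fin n, ‖ω (τ i) zs‖ := by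
      rw [← Fin.sum_univ_eq_sum_range (fun j => G j) n]
      apply Finset.sum_congr rfl
      intro i _
      show G i.val = _
      rw [hGdef]
      simp only []
      rw [dif_pos i.isLt]
    have hperm : ∑ i : Fin n, ‖ω (τ i) zs‖ = ∑ i, ‖ω i zs‖ :=
      Equiv.sum_comp τ (fun i => ‖ω i zs‖)
    have hsum2 : ∑ i, ‖ω i zs‖^2 = (n:ℝ) * σ2 := by
      rw [hσ2, ← mul_assoc, mul_inv_cancel₀ (ne_of_gt hn0), one_mul]
    have hCS : (∑ i, ‖ω i zs‖)^2 ≤ (n:ℝ) * ∑ i, ‖ω i zs‖^2 := by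
      have := sq_sum_le_card_mul_sum_sq (s := (Finset.univ : Finset (Fin n)))
        (f := fun i : Fin n => ‖ω i zs‖)
      simpa using this
    have hsq2 : (∑ i, ‖ω i zs‖)^2 ≤ ((n:ℝ)*σ)^2 := by
      rw [mul_pow, hσsq]
      calc (∑ i, ‖ω i zs‖)^2 ≤ (n:ℝ) * ∑ i, ‖ω i zs‖^2 := hCS
        _ = (n:ℝ)*((n:ℝ)*σ2) := by rw [hsum2]
        _ = (n:ℝ)^2*σ2 := by ring
    have hsnn : 0 ≤ ∑ i, ‖ω i zs‖ := Finset.sum_nonneg fun i _ => norm_nonneg _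
    rw [hGeq, hperm]
    calc ∑ i, ‖ω i zs‖ = Real.sqrt ((∑ i, ‖ω i zs‖)^2) := (Real.sqrt_sq hsnn).symm
      _ ≤ Real.sqrt (((n:ℝ)*σ)^2) := Real.sqrt_le_sqrt hsq2
      _ = (n:ℝ)*σ := Real.sqrt_sq (by positivity)
  -- geometric sum bound
  have hPn : ∑ m ∈ Finset.range n, (1+x)^m ≤ (10/9)*(n:ℝ) := by
    have hP := geomP_le x hx0 n hnx
    nlinarith [mul_le_mul_of_nonneg_left hnx hn0.le]
  have hG0' : (0:ℝ) ≤ ∑ j ∈ Finset.range n, G j :=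
    Finset.sum_nonneg fun j _ => hG0 j
  have hS2 : ∑ i ∈ Finset.range n, a i
      ≤ (5/9)*(n:ℝ)^2*x*r + α*(((10/9)*(n:ℝ))*((n:ℝ)*σ)) := by
    have hPS : (∑ m ∈ Finset.range n, (1+x)^m) * ∑ j ∈ Finset.range n, G j
        ≤ ((10/9)*(n:ℝ))*((n:ℝ)*σ) :=
      mul_le_mul hPn hGsum hG0' (by positivity)
    have := mul_le_mul_of_nonneg_left hPS hα0.le
    have hcm : r*((5/9)*(n:ℝ)^2*x) = (5/9)*(n:ℝ)^2*x*r := by ring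
    linarith [hsuma]
  -- the error term e
  set e := ∑ j : Fin n, (ω (τ j) (w (j:ℕ)) - ω (τ j) z) with hedef
  have hEbound : ‖e‖ ≤ l * ∑ i ∈ Finset.range n, a i := by
    calc ‖e‖ ≤ ∑ j : Fin n, ‖ω (τ j) (w (j:ℕ)) - ω (τ j) z‖ := norm_sum_le _ _
      _ ≤ ∑ j : Fin n, l * a (j:ℕ) := by
          apply Finset.sum_le_sum
          intro j _
          exact hlip (τ j) (w (j:ℕ)) z
      _ = l * ∑ j : Fin n, a (j:ℕ) := by rw [Finset.mul_sum]
      _ = l * ∑ i ∈ Finset.range n, a i := by rw [Fin.sum_univ_eq_sum_range (fun i => a i) n]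
  -- decomposition of w n - zs
  have hνz : (n:ℝ) • ν z = ∑ i, ω i z := by
    rw [hν z, smul_smul, mul_inv_cancel₀ (ne_of_gt hn0), one_smul]
  have hwn : w n - zs = ((z - zs) - ((n:ℝ)*α) • ν z) - α • e := by
    have h1 : w n = z - α • ∑ j ∈ Finset.range n,
        (if h : j < n then ω (τ ⟨j,h⟩) (w j) else 0) :=
      hwsum n le_rfl
    have h2 : ∑ j ∈ Finset.range n,
        (if h : j < n then ω (τ ⟨j,h⟩) (w j) else 0)
        = ∑ j : Fin n, ω (τ j) (w (j:ℕ)) := by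
      rw [← Fin.sum_univ_eq_sum_range
        (fun j => if h : j < n then ω (τ ⟨j,h⟩) (w j) else 0) n]
      apply Finset.sum_congr rfl
      intro i _
      rw [dif_pos i.isLt]
    have h3 : ∑ j : Fin n, ω (τ j) (w (j:ℕ)) = e + ∑ j : Fin n, ω (τ j) z := by
      rw [hedef, Finset.sum_sub_distrib]
      abel
    have h4 : ∑ j : Fin n, ω (τ j) z = (n:ℝ) • ν z := by
      rw [hνz]; exact Equiv.sum_comp τ (fun i => ω i z)
    rw [h1, h2, h3, h4, smul_add, smul_smul, mul_comm α (n:ℝ)]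
    abel
  set u := (z - zs) - ((n:ℝ)*α) • ν z with hudef
  -- strong monotonicity at z vs zs
  have hinner_mono : ⟪ν z, z - zs⟫ ≥ μ * r^2 := by
    have h := hmono z zs
    rw [hzs, sub_zero] at h
    exact h
  -- Lipschitz bound on ν
  have hνnorm : ‖ν z‖ ≤ l * r := by
    have hsub : ν z = (n:ℝ)⁻¹ • ∑ i, (ω i z - ω i zs) := by
      have h0 : ν z = ν z - ν zs := by rw [hzs, sub_zero]
      rw [h0, hν z, hν zs, ← smul_sub, ← Finset.sum_sub_distrib]
    have h1 : ‖∑ i, (ω i z - ω i zs)‖ ≤ ∑ i : Fin n, (l * ‖z - zs‖) :=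
      (norm_sum_le _ _).trans (Finset.sum_le_sum fun i _ => hlip i z zs)
    have h2 : ∑ i : Fin n, (l*‖z-zs‖) = (n:ℝ)*(l*r) := by
      rw [Finset.sum_const, Finset.card_univ, Fintype.card_fin, nsmul_eq_mul]
    rw [hsub, norm_smul, Real.norm_of_nonneg (by positivity : (0:ℝ) ≤ (n:ℝ)⁻¹)]
    calc (n:ℝ)⁻¹ * ‖∑ i, (ω i z - ω i zs)‖ ≤ (n:ℝ)⁻¹ * ((n:ℝ)*(l*r)) := by
          apply mul_le_mul_of_nonneg_left _ (by positivity)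
          rw [← h2]; exact h1
      _ = l * r := by field_simp
  -- bound on ‖u‖²
  have hβ0 : (0:ℝ) ≤ (n:ℝ)*α := by positivity
  have hu2 : ‖u‖^2 ≤ (1 - 9/5*q)*r^2 := by
    have hexp : ‖u‖^2 = ‖z-zs‖^2 - 2*(((n:ℝ)*α) * ⟪z-zs, ν z⟫)
        + (((n:ℝ)*α))^2*‖ν z‖^2 := by
      rw [hudef, norm_sub_sq_real, real_inner_smul_right, norm_smul,
        Real.norm_of_nonneg hβ0, mul_pow]
    have hcomm : ⟪z-zs, ν z⟫ = ⟪ν z, z-zs⟫ := real_inner_comm _ _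
    have hν2 : ‖ν z‖^2 ≤ l^2*r^2 := by
      nlinarith [hνnorm, norm_nonneg (ν z), mul_nonneg hl.le hr0]
    have A1 : ((n:ℝ)*α) * ⟪ν z, z-zs⟫ ≥ ((n:ℝ)*α)*(μ*r^2) :=
      mul_le_mul_of_nonneg_left hinner_mono hβ0
    have A2 : (((n:ℝ)*α))^2*‖ν z‖^2 ≤ (q/5)*r^2 := by
      have B1 := mul_le_mul_of_nonneg_left hν2 (sq_nonneg ((n:ℝ)*α))
      have B2 : ((n:ℝ)*α)^2*(l^2*r^2) ≤ ((n:ℝ)*α)*(μ/5)*r^2 := by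
        have h5' : (n:ℝ)*α*l^2 ≤ μ/5 := by linarith [h5, (by ring : α*(n:ℝ)*l^2 = (n:ℝ)*α*l^2)]
        nlinarith [mul_le_mul_of_nonneg_left h5' hβ0, sq_nonneg r,
          mul_le_mul_of_nonneg_right (mul_le_mul_of_nonneg_left h5' hβ0) (sq_nonneg r)]
      have B3 : ((n:ℝ)*α)*(μ/5)*r^2 = (q/5)*r^2 := by rw [hqdef]; ring
      linarith
    have hq' : 2*(((n:ℝ)*α)*(μ*r^2)) = 2*(q*r^2) := by rw [hqdef]; ring
    have hrr : ‖z-zs‖^2 = r^2 := by rw [hrdef]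
    rw [hexp, hcomm, hrr]
    linarith [A1, A2]
  have hu_r : ‖u‖ ≤ r := by
    have h1 : ‖u‖^2 ≤ r^2 := by nlinarith [hu2, mul_nonneg hq0.le (sq_nonneg r)]
    calc ‖u‖ = Real.sqrt (‖u‖^2) := (Real.sqrt_sq (norm_nonneg _)).symm
      _ ≤ Real.sqrt (r^2) := Real.sqrt_le_sqrt h1
      _ = r := Real.sqrt_sq hr0
  -- expansion of the final square
  have hfinal : ‖w n - zs‖^2 ≤ ‖u‖^2 + 2*α*‖u‖*‖e‖ + α^2*‖e‖^2 := by
    rw [hwn]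
    have hexp : ‖u - α • e‖^2 = ‖u‖^2 - 2*⟪u, α•e⟫ + ‖α•e‖^2 := norm_sub_sq_real _ _
    have habs : |⟪u, α•e⟫| ≤ ‖u‖*‖α•e‖ := abs_real_inner_le_norm _ _
    have hnsm : ‖α•e‖ = α*‖e‖ := by rw [norm_smul, Real.norm_of_nonneg hα0.le]
    have h2' : ‖α•e‖^2 = α^2*‖e‖^2 := by rw [hnsm]; ring
    have h3' : -⟪u,α•e⟫ ≤ ‖u‖*(α*‖e‖) := by
      rw [← hnsm]; exact (neg_le_abs _).trans habs
    rw [hexp, h2']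
    linarith [h3']
  -- putting everything together
  have hEfin : ‖e‖ ≤ (5/9)*α*l^2*(n:ℝ)^2*r + (10/9)*α*l*(n:ℝ)^2*σ := by
    have h1 := mul_le_mul_of_nonneg_left hS2 hl.le
    have h2 : l*((5/9)*(n:ℝ)^2*x*r + α*(((10/9)*(n:ℝ))*((n:ℝ)*σ)))
        = (5/9)*α*l^2*(n:ℝ)^2*r + (10/9)*α*l*(n:ℝ)^2*σ := by rw [hxdef]; ring
    linarith [hEbound]
  have h5' : (n:ℝ)*α*l^2 ≤ μ/5 := by linear_combination h5
  have h1c : 2*α*((5/9)*α*l^2*(n:ℝ)^2) ≤ (2/9)*q := by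
    rw [hqdef]
    calc 2*α*((5/9)*α*l^2*(n:ℝ)^2) = (10/9)*(α*(n:ℝ))*(α*(n:ℝ)*l^2) := by ring
      _ ≤ (10/9)*(α*(n:ℝ))*(μ/5) :=
          mul_le_mul_of_nonneg_left (by linear_combination h5) (by positivity)
      _ = (2/9)*((n:ℝ)*α*μ) := by ring
  have h2c : 2*(α*((10/9)*α*l*(n:ℝ)^2))^2 ≤ q*((200/81)*(α^3*l^2*(n:ℝ)^3/μ)) := by
    have heq : q*((200/81)*(α^3*l^2*(n:ℝ)^3/μ)) = (200/81)*(α^4*l^2*(n:ℝ)^4) := by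
      rw [hqdef]; field_simp
    rw [heq]
    exact le_of_eq (by ring)
  have h3c : 2*α^2*((5/9)*α*l^2*(n:ℝ)^2)^2 ≤ (2/405)*q := by
    have k0 : (0:ℝ) ≤ α*(n:ℝ)*l^2 := by positivity
    have k2 : (α*(n:ℝ)*l^2)^2 ≤ (μ/5)^2 := pow_le_pow_left₀ k0 h5 2
    have k4 : q^2 ≤ (1/5)*q := by
      calc q^2 = q*q := sq q
        _ ≤ (1/5)*q := mul_le_mul_of_nonneg_right hq5 hq0.le
    have k5 := mul_le_mul_of_nonneg_right k2 (sq_nonneg ((n:ℝ)*α))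
    calc 2*α^2*((5/9)*α*l^2*(n:ℝ)^2)^2
        = (50/81)*((α*(n:ℝ)*l^2)^2*((n:ℝ)*α)^2) := by ring
      _ ≤ (50/81)*((μ/5)^2*((n:ℝ)*α)^2) := mul_le_mul_of_nonneg_left k5 (by norm_num)
      _ = (2/81)*q^2 := by rw [hqdef]; ring
      _ ≤ (2/81)*((1/5)*q) := mul_le_mul_of_nonneg_left k4 (by norm_num)
      _ = (2/405)*q := by ring
  have h4c : 2*α^2*((10/9)*α*l*(n:ℝ)^2)^2 ≤ (40/81)*(α^3*l^2*(n:ℝ)^3/μ) := by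
    have m1 : 2*α^2*((10/9)*α*l*(n:ℝ)^2)^2 ≤ (40/81)*(α^3*(n:ℝ)^3)*μ := by
      calc 2*α^2*((10/9)*α*l*(n:ℝ)^2)^2
          = (200/81)*(α^3*(n:ℝ)^3)*(α*(n:ℝ)*l^2) := by ring
        _ ≤ (200/81)*(α^3*(n:ℝ)^3)*(μ/5) :=
            mul_le_mul_of_nonneg_left (by linear_combination h5) (by positivity)
        _ = (40/81)*(α^3*(n:ℝ)^3)*μ := by ring
    have hμμ : μ*μ ≤ l^2 := by
      calc μ*μ ≤ l*l := mul_le_mul hμl hμl hμ.le (hμ.le.trans hμl)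
        _ = l^2 := (sq l).symm
    have m2 : (40/81)*(α^3*(n:ℝ)^3)*μ ≤ (40/81)*(α^3*l^2*(n:ℝ)^3/μ) := by
      rw [show (40/81)*(α^3*l^2*(n:ℝ)^3/μ) = ((40/81)*(α^3*(n:ℝ)^3)*l^2)/μ from by ring,
        le_div_iff₀ hμ]
      calc (40/81)*(α^3*(n:ℝ)^3)*μ*μ = (40/81)*(α^3*(n:ℝ)^3)*(μ*μ) := by ring
        _ ≤ (40/81)*(α^3*(n:ℝ)^3)*l^2 :=
            mul_le_mul_of_nonneg_left hμμ (by positivity)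
    linarith
  have happ := combine_abs q ((5/9)*α*l^2*(n:ℝ)^2) ((10/9)*α*l*(n:ℝ)^2) r σ (‖u‖) (‖e‖)
      ((200/81)*(α^3*l^2*(n:ℝ)^3/μ)) ((40/81)*(α^3*l^2*(n:ℝ)^3/μ)) α
      hq0 hr0 hσnn (norm_nonneg u) (norm_nonneg e) hα0.le
      (by positivity) (by positivity) (by positivity) (by positivity)
      hu_r hu2 hEfin h1c h2c h3c h4c
  have hD : ((200/81)*(α^3*l^2*(n:ℝ)^3/μ))*σ^2 + ((40/81)*(α^3*l^2*(n:ℝ)^3/μ))*σ^2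
      ≤ 3*l^2*σ2*α^3*(n:ℝ)^3/μ := by
    rw [hσsq]
    have hpos : (0:ℝ) ≤ (α^3*l^2*(n:ℝ)^3/μ)*σ2 := by positivity
    calc ((200/81)*(α^3*l^2*(n:ℝ)^3/μ))*σ2 + ((40/81)*(α^3*l^2*(n:ℝ)^3/μ))*σ2
        = (240/81)*((α^3*l^2*(n:ℝ)^3/μ)*σ2) := by ring
      _ ≤ 3*((α^3*l^2*(n:ℝ)^3/μ)*σ2) := mul_le_mul_of_nonneg_right (by norm_num) hpos
      _ = 3*l^2*σ2*α^3*(n:ℝ)^3/μ := by ring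
  calc ‖w n - zs‖^2 ≤ ‖u‖^2 + 2*α*‖u‖*‖e‖ + α^2*‖e‖^2 := hfinal
    _ ≤ (1-q)*r^2 + ((200/81)*(α^3*l^2*(n:ℝ)^3/μ))*σ^2
        + ((40/81)*(α^3*l^2*(n:ℝ)^3/μ))*σ^2 := happ
    _ ≤ (1-q)*r^2 + 3*l^2*σ2*α^3*(n:ℝ)^3/μ := by linarith [hD]


/-- GDA with Adversarial Shuffling (in particular Incremental Gradient): for EVERY
sequence of permutations, the final epoch iterate satisfies
`‖z^{K+1}₀ − z*‖² ≤ 2e^{−nαμK}‖z₀ − z*‖² + 3l²σ*²α³n³K/μ`. -/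
theorem stmt_12
    {E : Type*} [NormedAddCommGroup E] [InnerProductSpace ℝ E] [FiniteDimensional ℝ E]
    (n : ℕ) (hn : 1 ≤ n) (ω : Fin n → E → E) (l μ : ℝ) (hμ : 0 < μ) (hμl : μ ≤ l)
    (hlip : ∀ (i : Fin n) (z₁ z₂ : E), ‖ω i z₁ - ω i z₂‖ ≤ l * ‖z₁ - z₂‖)
    (ν : E → E) (hν : ∀ z, ν z = (n : ℝ)⁻¹ • ∑ i, ω i z)
    (hmono : ∀ z₁ z₂, ⟪ν z₁ - ν z₂, z₁ - z₂⟫ ≥ μ * ‖z₁ - z₂‖ ^ 2)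
    (zs : E) (hzs : ν zs = 0)
    (σ2 : ℝ) (hσ2 : σ2 = (n : ℝ)⁻¹ * ∑ i, ‖ω i zs‖ ^ 2)
    (z0 : E) (K : ℕ) (hK : 1 ≤ K) (α : ℝ) (hα0 : 0 < α) (hα : α ≤ μ / (5 * n * l ^ 2)) :
    ∀ τs : ℕ → Equiv.Perm (Fin n),
      ‖gdaEpochs ω α τs z0 K - zs‖ ^ 2
        ≤ 2 * Real.exp (-((n : ℝ) * α * μ * K)) * ‖z0 - zs‖ ^ 2 +
            3 * l ^ 2 * σ2 * α ^ 3 * (n : ℝ) ^ 3 * K / μ := by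
  intro τs
  have hl : 0 < l := hμ.trans_le hμl
  have hn0 : (0:ℝ) < n := by exact_mod_cast hn
  have hq0 : 0 < (n:ℝ)*α*μ := by positivity
  have hσ2nn : 0 ≤ σ2 := by
    rw [hσ2]
    have : (0:ℝ) ≤ ∑ i, ‖ω i zs‖^2 := Finset.sum_nonneg fun i _ => sq_nonneg _
    positivity
  have hD0 : 0 ≤ 3*l^2*σ2*α^3*(n:ℝ)^3/μ := by positivity
  set q := (n:ℝ)*α*μ with hqdef
  set D := 3*l^2*σ2*α^3*(n:ℝ)^3/μ with hDdef
  set R := ‖z0 - zs‖^2 with hRdef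
  have hR0 : 0 ≤ R := by rw [hRdef]; positivity
  have key : ∀ k : ℕ, ‖gdaEpochs ω α τs z0 k - zs‖^2
      ≤ Real.exp (-(q*k)) * R + k*D := by
    intro k
    induction k with
    | zero =>
      rw [gdaEpochs]
      simp [hRdef]
    | succ k ih =>
      have hep := epoch n hn ω l μ hμ hμl hlip ν hν hmono zs hzs σ2 hσ2 α hα0 hα
        (τs k) (gdaEpochs ω α τs z0 k)
      have hrec : gdaEpochs ω α τs z0 (k+1)
          = gdaStep ω α (τs k) (gdaEpochs ω α τs z0 k) n := by rw [gdaEpochs]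
      rw [hrec]
      have h1q : (1 - q) ≤ Real.exp (-q) := by
        have := Real.add_one_le_exp (-q); linarith
      have hprev0 : 0 ≤ ‖gdaEpochs ω α τs z0 k - zs‖^2 := sq_nonneg _
      have hexp1 : Real.exp (-q) ≤ 1 := by
        rw [← Real.exp_zero]
        exact Real.exp_le_exp.mpr (by linarith)
      have hmul : Real.exp (-q)*Real.exp (-(q*(k:ℝ))) = Real.exp (-(q*((k:ℕ)+1:ℝ))) := by
        rw [← Real.exp_add]; congr 1; ring
      have hkD0 : 0 ≤ (k:ℝ)*D := mul_nonneg (Nat.cast_nonneg k) (hDdef ▸ hD0)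
      have hkd : Real.exp (-q)*((k:ℝ)*D) ≤ (k:ℝ)*D := mul_le_of_le_one_left hkD0 hexp1
      have step1 : ‖gdaStep ω α (τs k) (gdaEpochs ω α τs z0 k) n - zs‖^2
          ≤ (1-q)*‖gdaEpochs ω α τs z0 k - zs‖^2 + D := hep
      have step2 : (1-q)*‖gdaEpochs ω α τs z0 k - zs‖^2
          ≤ Real.exp (-q)*‖gdaEpochs ω α τs z0 k - zs‖^2 :=
        mul_le_mul_of_nonneg_right h1q hprev0
      have step3 : Real.exp (-q)*‖gdaEpochs ω α τs z0 k - zs‖^2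
          ≤ Real.exp (-q)*(Real.exp (-(q*(k:ℝ)))*R + (k:ℝ)*D) :=
        mul_le_mul_of_nonneg_left ih (Real.exp_pos (-q)).le
      have hdist : Real.exp (-q)*(Real.exp (-(q*(k:ℝ)))*R + (k:ℝ)*D)
          = Real.exp (-q)*Real.exp (-(q*(k:ℝ)))*R + Real.exp (-q)*((k:ℝ)*D) := by ring
      have hcast : ((k+1:ℕ):ℝ) = (k:ℝ)+1 := by push_cast; ring
      rw [hcast]
      rw [hdist, hmul] at step3
      have : (((k:ℕ):ℝ)+1)*D = (k:ℝ)*D + D := by ring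
      rw [this]
      calc ‖gdaStep ω α (τs k) (gdaEpochs ω α τs z0 k) n - zs‖^2
          ≤ (1-q)*‖gdaEpochs ω α τs z0 k - zs‖^2 + D := step1
        _ ≤ Real.exp (-(q*((k:ℝ)+1)))*R + Real.exp (-q)*((k:ℝ)*D) + D := by
            linarith [step2, step3]
        _ ≤ Real.exp (-(q*((k:ℝ)+1)))*R + ((k:ℝ)*D + D) := by linarith [hkd]
  have hKf := key K
  have hexpR0 : 0 ≤ Real.exp (-(q*(K:ℝ)))*R := mul_nonneg (Real.exp_pos _).le hR0
  have heq1 : -(q*(K:ℝ)) = -((n:ℝ)*α*μ*(K:ℝ)) := by rw [hqdef]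
  have heq2 : (K:ℝ)*D = 3*l^2*σ2*α^3*(n:ℝ)^3*(K:ℝ)/μ := by rw [hDdef]; ring
  rw [heq1] at hKf hexpR0
  calc ‖gdaEpochs ω α τs z0 K - zs‖^2
      ≤ Real.exp (-((n:ℝ)*α*μ*(K:ℝ)))*R + (K:ℝ)*D := hKf
    _ ≤ 2*Real.exp (-((n:ℝ)*α*μ*(K:ℝ)))*R + (K:ℝ)*D := by linarith [hexpR0]
    _ = 2*Real.exp (-((n:ℝ)*α*μ*(K:ℝ)))*R + 3*l^2*σ2*α^3*(n:ℝ)^3*(K:ℝ)/μ := by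
        rw [heq2]
end
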